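/- arXiv:2302.07487 — 5 statements merged into one kernel-verified Lean document; each statement's English description precedes it below -/
import Mathlib

section
/- Let α: ℝ → [0,∞) be locally bounded and positive on [x₀,∞) for some x₀ > 0. If α is asymptotic to a non-increasing function, i.e. sup_{t ≥ x} α(t) ∼ α(x) and inf_{x₀ ≤ t ≤ x} α(t) ∼ α(x) as x → ∞, then there exists a positive non-increasing function β with α(x) ∼ β(x) as x → ∞. -/
open MeasureTheory Filter Set Topology

/-- Mass of the interval `(x, x+c]` under `μ`, i.e. `F(x+Δ)` for `Δ = (0,c]`. -/
noncomputable def tailI (μ : Measure ℝ) (c x : ℝ) : ℝ := (μ (Ioc x (x + c))).toReal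

/-- `F ∈ ℒ_Δ`: `x ↦ F(x+Δ)` is eventually positive and long-tailed. -/
def LongDelta (μ : Measure ℝ) (c : ℝ) : Prop :=
  (∀ᶠ x in atTop, 0 < tailI μ c x) ∧
  ∀ y : ℝ, 0 < y → Tendsto (fun x => tailI μ c (x + y) / tailI μ c x) atTop (𝓝 1)

/-- `F ∈ 𝒮_Δ`: Δ-subexponentiality. -/
def SDelta (μ : Measure ℝ) (c : ℝ) : Prop :=
  LongDelta μ c ∧
  Tendsto (fun x => tailI (μ.conv μ) c x / tailI μ c x) atTop (𝓝 2)

/-- almost decreasing function -/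
def AlmostDec (α : ℝ → ℝ) : Prop :=
  ∃ x₀ > (0:ℝ), ∃ K > (0:ℝ), ∀ x > x₀, ∀ y > (0:ℝ), α (x + y) ≤ K * α x

/-- `F ∈ 𝒟_Δ` -/
def DDelta (μ : Measure ℝ) (c : ℝ) : Prop := AlmostDec (tailI μ c)

/-- asymptotic to a non-increasing function (a.n.i.): locally bounded and positive on
`[x₀,∞)` and `sup_{t ≥ x} α(t) ∼ α(x)`, `inf_{x₀ ≤ t ≤ x} α(t) ∼ α(x)`. -/
def ANI (α : ℝ → ℝ) : Prop :=
  ∃ x₀ > (0:ℝ), (∀ x ∈ Ici x₀, 0 < α x) ∧ (∀ x : ℝ, BddAbove (α '' Icc x₀ x)) ∧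
    Tendsto (fun x => sSup (α '' Ici x) / α x) atTop (𝓝 1) ∧
    Tendsto (fun x => sInf (α '' Icc x₀ x) / α x) atTop (𝓝 1)

/-- `F ∈ 𝒜_Δ` -/
def ADelta (μ : Measure ℝ) (c : ℝ) : Prop := ANI (tailI μ c)

/-- `nconv μ n` is the `n`-fold convolution of `μ`, with `nconv μ 0 = δ₀`. -/
noncomputable def nconv (μ : Measure ℝ) : ℕ → Measure ℝ
  | 0 => Measure.dirac 0
  | n + 1 => (nconv μ n).conv μ

/-- `f ∈ ℒ` for densities. -/
def LongFun (f : ℝ → ℝ) : Prop :=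
  (∀ᶠ x in atTop, 0 < f x) ∧
  ∀ y : ℝ, Tendsto (fun x => f (x + y) / f x) atTop (𝓝 1)

/-- convolution of density functions -/
noncomputable def convFun (f g : ℝ → ℝ) (x : ℝ) : ℝ := ∫ y, f (x - y) * g y

/-- `f ∈ 𝒮`: subexponential density on ℝ. -/
def SubexpFun (f : ℝ → ℝ) : Prop :=
  LongFun f ∧ Tendsto (fun x => convFun f f x / f x) atTop (𝓝 2)

/-- `nconvFun f n` is the `(n+1)`-fold convolution of the density `f`. -/
noncomputable def nconvFun (f : ℝ → ℝ) : ℕ → ℝ → ℝ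
  | 0 => f
  | n + 1 => convFun (nconvFun f n) f

theorem exists_antitone_of_ani (α : ℝ → ℝ) (hα0 : ∀ x, 0 ≤ α x) (hα : ANI α) :
    ∃ β : ℝ → ℝ, (∀ x, 0 < β x) ∧ Antitone β ∧
      Tendsto (fun x => α x / β x) atTop (𝓝 1) := by
  obtain ⟨x₀, hx₀, hpos, hbdd, hsup, hinf⟩ := hα
  have hev : ∀ᶠ x in atTop, 1/2 < sSup (α '' Ici x) / α x :=
    hsup.eventually (eventually_gt_nhds (by norm_num))
  obtain ⟨x₁, hx₁r, hx₁0⟩ := (hev.and (eventually_ge_atTop x₀)).exists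
  have hαx₁ : 0 < α x₁ := hpos x₁ hx₁0
  have hsSup_pos : 0 < sSup (α '' Ici x₁) := by
    have h := (lt_div_iff₀ hαx₁).mp hx₁r
    nlinarith
  have hBdd : BddAbove (α '' Ici x₁) := by
    by_contra h
    rw [Real.sSup_of_not_bddAbove h] at hsSup_pos
    exact lt_irrefl 0 hsSup_pos
  have hBdd' : ∀ x : ℝ, BddAbove (α '' Ici (max x x₁)) := fun x =>
    hBdd.mono (image_mono (Ici_subset_Ici.mpr (le_max_right _ _)))
  refine ⟨fun x => sSup (α '' Ici (max x x₁)), ?_, ?_, ?_⟩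
  · intro x
    have hmem : α (max x x₁) ∈ α '' Ici (max x x₁) := ⟨_, self_mem_Ici, rfl⟩
    have : 0 < α (max x x₁) := hpos _ (le_trans hx₁0 (le_max_right _ _))
    exact lt_of_lt_of_le this (le_csSup (hBdd' x) hmem)
  · intro x y hxy
    refine csSup_le_csSup (hBdd' x) ⟨α (max y x₁), _, self_mem_Ici, rfl⟩
      (image_mono (Ici_subset_Ici.mpr (max_le_max hxy le_rfl)))
  · have h1 : Tendsto (fun x => (sSup (α '' Ici x) / α x)⁻¹) atTop (𝓝 1) := by
      simpa using hsup.inv₀ one_ne_zero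
    refine h1.congr' ?_
    filter_upwards [eventually_ge_atTop x₁] with x hx
    rw [inv_div, max_eq_left hx]
end

section
/- Suppose F is a probability distribution on ℝ with density f, F ∈ ℒ_Δ for some Δ = (0,c], and f is asymptotic to a non-increasing function (f ∈ 𝒜). Then f is long-tailed: f(x+y)/f(x) → 1 as x → ∞ for every fixed y ∈ ℝ. -/
open MeasureTheory Filter Set Topology

theorem longFun_of_longDelta_ani (f : ℝ → ℝ) (hf0 : ∀ x, 0 ≤ f x)
    (μ : Measure ℝ) [IsProbabilityMeasure μ]
    (hμ : μ = MeasureTheory.volume.withDensity (fun x => ENNReal.ofReal (f x)))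
    (c : ℝ) (hc : 0 < c) (hL : LongDelta μ c) (hA : ANI f) :
    ∀ y : ℝ, Tendsto (fun x => f (x + y) / f x) atTop (𝓝 1) := by
  obtain ⟨x₀, hx₀, hpos, hbdd, hgf, hif⟩ := hA
  set g : ℝ → ℝ := fun x => sSup (f '' Ici x) with hgdef
  set i : ℝ → ℝ := fun x => sInf (f '' Icc x₀ x) with hidef
  -- eventually structure: positivity, bddAbove
  have hibdd : ∀ x, BddBelow (f '' Icc x₀ x) := by
    intro x
    exact ⟨0, fun v ⟨t, _, ht⟩ => ht ▸ hf0 t⟩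
  have hev : ∀ᶠ x in atTop, x₀ ≤ x ∧ BddAbove (f '' Ici x) ∧ 0 < g x ∧ 0 < i x := by
    have h1 : ∀ᶠ x in atTop, (1:ℝ)/2 < g x / f x := hgf.eventually (eventually_gt_nhds (by norm_num))
    have h2 : ∀ᶠ x in atTop, (1:ℝ)/2 < i x / f x := hif.eventually (eventually_gt_nhds (by norm_num))
    filter_upwards [h1, h2, eventually_ge_atTop x₀] with x h1 h2 hx
    have hfx : 0 < f x := hpos x hx
    have hgx : 0 < g x := by
      by_contra h
      push_neg at h
      have : g x / f x ≤ 0 := div_nonpos_of_nonpos_of_nonneg h hfx.le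
      linarith
    have hix : 0 < i x := by
      by_contra h
      push_neg at h
      have : i x / f x ≤ 0 := div_nonpos_of_nonpos_of_nonneg h hfx.le
      linarith
    refine ⟨hx, ?_, hgx, hix⟩
    by_contra h
    rw [hgdef] at hgx
    simp only [Real.sSup_of_not_bddAbove h] at hgx
    exact lt_irrefl 0 hgx
  obtain ⟨X₁, hX₁⟩ := eventually_atTop.1 hev
  -- facts about g and i on [X₁, ∞) resp [x₀, ∞)
  have hX₁x₀ : x₀ ≤ X₁ ∨ True := Or.inr trivial
  have hle_g : ∀ x, X₁ ≤ x → ∀ t, x ≤ t → f t ≤ g x := by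
    intro x hx t ht
    exact le_csSup (hX₁ x hx).2.1 ⟨t, ht, rfl⟩
  have hg_anti : ∀ x, X₁ ≤ x → ∀ x', x ≤ x' → g x' ≤ g x := by
    intro x hx x' hx'
    exact csSup_le_csSup (hX₁ x hx).2.1 ⟨f x', ⟨x', le_refl x', rfl⟩⟩
      (image_mono (Ici_subset_Ici.2 hx'))
  have hi_le : ∀ x t, x₀ ≤ t → t ≤ x → i x ≤ f t := by
    intro x t ht htx
    exact csInf_le (hibdd x) ⟨t, ⟨ht, htx⟩, rfl⟩
  have hi_anti : ∀ x, x₀ ≤ x → ∀ x', x ≤ x' → i x' ≤ i x := by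
    intro x hx x' hx'
    exact csInf_le_csInf (hibdd x') ⟨f x, ⟨x, ⟨hx, le_refl x⟩, rfl⟩⟩
      (image_mono (Icc_subset_Icc_right hx'))
  -- tail bounds
  have tail_upper : ∀ x, X₁ ≤ x → tailI μ c x ≤ c * g x := by
    intro x hx
    have hμs : μ (Ioc x (x + c)) = ∫⁻ t in Ioc x (x + c), ENNReal.ofReal (f t) := by
      rw [hμ, withDensity_apply _ measurableSet_Ioc]
    have hb : (∫⁻ t in Ioc x (x + c), ENNReal.ofReal (f t)) ≤
        ∫⁻ _ in Ioc x (x + c), ENNReal.ofReal (g x) := by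
      refine lintegral_mono_ae ?_
      refine (ae_restrict_iff' measurableSet_Ioc).2 (ae_of_all _ fun t ht => ?_)
      exact ENNReal.ofReal_le_ofReal (hle_g x hx t ht.1.le)
    rw [setLIntegral_const, Real.volume_Ioc] at hb
    have e : x + c - x = c := by ring
    rw [e] at hb
    have hμle : μ (Ioc x (x + c)) ≤ ENNReal.ofReal (g x) * ENNReal.ofReal c := hμs ▸ hb
    have := ENNReal.toReal_mono (by finiteness) hμle
    rwa [ENNReal.toReal_mul, ENNReal.toReal_ofReal ((hX₁ x hx).2.2.1).le,
      ENNReal.toReal_ofReal hc.le, mul_comm] at this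
  have tail_lower : ∀ x, x₀ ≤ x → c * i (x + c) ≤ tailI μ c x := by
    intro x hx
    have hi0 : 0 ≤ i (x + c) := by
      refine le_csInf ⟨f x, ⟨x, ⟨hx, by linarith⟩, rfl⟩⟩ ?_
      rintro b ⟨t, _, rfl⟩
      exact hf0 t
    have hμs : μ (Ioc x (x + c)) = ∫⁻ t in Ioc x (x + c), ENNReal.ofReal (f t) := by
      rw [hμ, withDensity_apply _ measurableSet_Ioc]
    have hb : (∫⁻ _ in Ioc x (x + c), ENNReal.ofReal (i (x + c))) ≤
        ∫⁻ t in Ioc x (x + c), ENNReal.ofReal (f t) := by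
      refine lintegral_mono_ae ?_
      refine (ae_restrict_iff' measurableSet_Ioc).2 (ae_of_all _ fun t ht => ?_)
      exact ENNReal.ofReal_le_ofReal (hi_le (x + c) t (le_trans hx ht.1.le) ht.2)
    rw [setLIntegral_const, Real.volume_Ioc] at hb
    have e : x + c - x = c := by ring
    rw [e] at hb
    have hμge : ENNReal.ofReal (i (x + c)) * ENNReal.ofReal c ≤ μ (Ioc x (x + c)) := hμs ▸ hb
    have := ENNReal.toReal_mono (by finiteness) hμge
    rwa [ENNReal.toReal_mul, ENNReal.toReal_ofReal hi0,
      ENNReal.toReal_ofReal hc.le, mul_comm] at this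
  -- i/g → 1
  have hig : Tendsto (fun x => i x / g x) atTop (𝓝 1) := by
    have := hif.div hgf one_ne_zero
    rw [div_one] at this
    refine this.congr' ?_
    filter_upwards [eventually_ge_atTop x₀] with x hx
    have hfx := (hpos x hx).ne'
    show (i x / f x) / (g x / f x) = i x / g x
    rw [div_div_div_comm, div_self hfx, div_one]
  -- f/g → 1
  have hfg : Tendsto (fun x => f x / g x) atTop (𝓝 1) := by
    have := hgf.inv₀ one_ne_zero
    rw [inv_one] at this
    refine this.congr fun x => ?_
    rw [inv_div]
  -- the key step : g(x+c)/g(x) → 1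
  have key : Tendsto (fun x => g (x + c) / g x) atTop (𝓝 1) := by
    have hsub : Tendsto (fun x : ℝ => x - c) atTop atTop :=
      (tendsto_atTop_add_const_right atTop (-c) tendsto_id).congr fun x =>
        (sub_eq_add_neg x c).symm
    have hT : Tendsto (fun x => tailI μ c (x + c) / tailI μ c (x - c)) atTop (𝓝 1) := by
      have h2c := (hL.2 (2 * c) (by linarith)).comp hsub
      refine h2c.congr fun x => ?_
      have e : x - c + 2 * c = x + c := by ring
      simp only [Function.comp_apply, e]
    have hLlim : Tendsto
        (fun x => (i x / g x) * (tailI μ c (x + c) / tailI μ c (x - c))) atTop (𝓝 1) := by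
      have := hig.mul hT
      rwa [mul_one] at this
    obtain ⟨X₂, hX₂⟩ := eventually_atTop.1 hL.1
    refine tendsto_of_tendsto_of_tendsto_of_le_of_le' hLlim tendsto_const_nhds ?_ ?_
    · filter_upwards [eventually_ge_atTop X₁, eventually_ge_atTop (x₀ + c),
        eventually_ge_atTop (X₂ + c)] with x hx1 hx2 hx3
      have hix := (hX₁ x hx1).2.2.2
      have hgx := (hX₁ x hx1).2.2.1
      have hix' : i x ≠ 0 := hix.ne'
      have hgx' : g x ≠ 0 := hgx.ne'
      have hgxc := ((hX₁ (x + c) (by linarith)).2.2.1)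
      have htpos : 0 < tailI μ c (x - c) := hX₂ (x - c) (by linarith)
      have h1 : tailI μ c (x + c) ≤ c * g (x + c) := tail_upper (x + c) (by linarith)
      have h2 : c * i x ≤ tailI μ c (x - c) := by
        have h := tail_lower (x - c) (by linarith)
        have e : x - c + c = x := by ring
        rwa [e] at h
      have h3 : tailI μ c (x + c) / tailI μ c (x - c) ≤ (c * g (x + c)) / (c * i x) :=
        div_le_div₀ (by positivity) h1 (by positivity) h2
      have h4 : (c * g (x + c)) / (c * i x) = g (x + c) / i x :=
        mul_div_mul_left _ _ hc.ne'
      calc i x / g x * (tailI μ c (x + c) / tailI μ c (x - c))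
          ≤ i x / g x * (g (x + c) / i x) :=
            mul_le_mul_of_nonneg_left (h4 ▸ h3) (by positivity)
        _ = g (x + c) / g x := by
            field_simp
    · filter_upwards [eventually_ge_atTop X₁] with x hx
      have hgx := (hX₁ x hx).2.2.1
      rw [div_le_one hgx]
      exact hg_anti x hx (x + c) (by linarith)
  -- iterate : g(x+n*c)/g(x) → 1
  have keyn : ∀ n : ℕ, Tendsto (fun x => g (x + n * c) / g x) atTop (𝓝 1) := by
    intro n
    induction n with
    | zero =>
      refine (tendsto_const_nhds (α := ℝ)).congr' ?_
      filter_upwards [eventually_ge_atTop X₁] with x hx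
      simp [div_self ((hX₁ x hx).2.2.1).ne']
    | succ n ih =>
      have hshift : Tendsto (fun x : ℝ => x + n * c) atTop atTop :=
        tendsto_atTop_add_const_right _ _ tendsto_id
      have h1 : Tendsto (fun x => g (x + n * c + c) / g (x + n * c)) atTop (𝓝 1) :=
        key.comp hshift
      have := (h1.mul ih)
      rw [mul_one] at this
      refine this.congr' ?_
      filter_upwards [eventually_ge_atTop X₁] with x hx
      have hgx : 0 < g (x + n * c) := by
        refine (hX₁ (x + n * c) ?_).2.2.1
        nlinarith [mul_nonneg (Nat.cast_nonneg (α := ℝ) n) hc.le]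
      have : x + n * c + c = x + (n + 1 : ℕ) * c := by push_cast; ring
      rw [this, div_mul_div_cancel₀ hgx.ne']
  -- all nonneg y
  have keyy : ∀ y : ℝ, 0 ≤ y → Tendsto (fun x => g (x + y) / g x) atTop (𝓝 1) := by
    intro y hy
    obtain ⟨n, hn⟩ := exists_nat_ge (y / c)
    have hnc : y ≤ n * c := by
      rw [div_le_iff₀ hc] at hn
      linarith
    refine tendsto_of_tendsto_of_tendsto_of_le_of_le' (keyn n) tendsto_const_nhds ?_ ?_
    · filter_upwards [eventually_ge_atTop X₁] with x hx
      have h1 : g (x + n * c) ≤ g (x + y) :=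
        hg_anti (x + y) (by linarith) (x + n * c) (by linarith)
      have hgx := (hX₁ x hx).2.2.1
      gcongr
    · filter_upwards [eventually_ge_atTop X₁] with x hx
      have hgx := (hX₁ x hx).2.2.1
      rw [div_le_one hgx]
      exact hg_anti x hx (x + y) (by linarith)
  -- all y
  have keyy' : ∀ y : ℝ, Tendsto (fun x => g (x + y) / g x) atTop (𝓝 1) := by
    intro y
    rcases le_or_gt 0 y with hy | hy
    · exact keyy y hy
    · have hshift : Tendsto (fun x : ℝ => x + y) atTop atTop :=
        tendsto_atTop_add_const_right _ _ tendsto_id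
      have h1 : Tendsto (fun x => g (x + y + -y) / g (x + y)) atTop (𝓝 1) :=
        (keyy (-y) (by linarith)).comp hshift
      have h2 : Tendsto (fun x => g x / g (x + y)) atTop (𝓝 1) := by
        refine h1.congr fun x => ?_
        ring_nf
      have := h2.inv₀ one_ne_zero
      rw [inv_one] at this
      refine this.congr fun x => ?_
      rw [inv_div]
  -- conclude
  intro y
  have hshift : Tendsto (fun x : ℝ => x + y) atTop atTop :=
    tendsto_atTop_add_const_right _ _ tendsto_id
  have h1 : Tendsto (fun x => f (x + y) / g (x + y)) atTop (𝓝 1) := hfg.comp hshift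
  have h2 := (h1.mul (keyy' y)).mul hgf
  rw [mul_one, mul_one] at h2
  refine h2.congr' ?_
  have hevy : ∀ᶠ x in atTop, X₁ ≤ x + y := by
    filter_upwards [eventually_ge_atTop (X₁ - y)] with x hx
    linarith
  filter_upwards [eventually_ge_atTop X₁, hevy, eventually_ge_atTop x₀] with x hx hxy hx0
  have hgy : g (x + y) ≠ 0 := ((hX₁ (x + y) hxy).2.2.1).ne'
  have hfx : f x ≠ 0 := (hpos x hx0).ne'
  have hgx : sSup (f '' Ici x) ≠ 0 := ((hX₁ x hx).2.2.1).ne'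
  field_simp
  rw [mul_div_assoc, show sSup (f '' Ici x) / g x = 1 from div_self hgx, mul_one]
end

section
/- Let F be a distribution on ℝ with F(x+Δ) almost decreasing for some Δ = (0,c] (F ∈ 𝒟_Δ). Let F₊ denote the conditional distribution of F on [0,∞), i.e., F₊(x) = (F(x) − F(0−))/(1 − F(0−)) for x ≥ 0. If F₊ ∈ 𝒮_Δ, then F ∈ 𝒮_Δ. -/
open MeasureTheory Filter Set Topology

open scoped ENNReal

lemma measE (μ : Measure ℝ) [IsFiniteMeasure μ] {c : ℝ} (hc : 0 ≤ c) :
    Measurable (fun x => μ (Ioc x (x + c))) := by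
  have h1 : Monotone (fun x : ℝ => μ (Iic x)) := fun a b hab => measure_mono (Iic_subset_Iic.2 hab)
  have h2 : Measurable (fun x : ℝ => μ (Iic x)) := h1.measurable
  have key : ∀ x : ℝ, μ (Ioc x (x + c)) = μ (Iic (x + c)) - μ (Iic x) := by
    intro x
    rw [← Iic_sdiff_Iic, measure_diff (Iic_subset_Iic.2 (by linarith : x ≤ x + c))
      measurableSet_Iic.nullMeasurableSet (measure_ne_top μ _)]
  simp only [key]
  exact (h2.comp (measurable_id.add_const c)).sub h2

lemma tailI_meas (μ : Measure ℝ) [IsFiniteMeasure μ] {c : ℝ} (hc : 0 ≤ c) :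
    Measurable (tailI μ c) :=
  (ENNReal.measurable_toReal).comp (measE μ hc)

lemma conv_apply_set (κ ρ : Measure ℝ) [SFinite ρ] {s : Set ℝ} (hs : MeasurableSet s) :
    (κ.conv ρ) s = ∫⁻ a, ρ {b | a + b ∈ s} ∂κ := by
  rw [Measure.conv, Measure.map_apply (by fun_prop) hs,
    Measure.prod_apply (measurable_add hs)]
  rfl

lemma setIoc (a x c : ℝ) : {b : ℝ | a + b ∈ Ioc x (x + c)} = Ioc (x - a) ((x - a) + c) := by
  ext b; simp only [mem_Ioc, mem_setOf_eq]
  constructor <;> intro ⟨h1, h2⟩ <;> constructor <;> linarith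

lemma smul_prod' (a : ℝ≥0∞) (κ ρ : Measure ℝ) [SFinite ρ] :
    (a • κ).prod ρ = a • (κ.prod ρ) := by
  ext s hs
  rw [Measure.smul_apply, Measure.prod_apply hs, Measure.prod_apply hs,
    lintegral_smul_measure]

lemma prod_smul' (a : ℝ≥0∞) (ha : a ≠ ⊤) (κ ρ : Measure ℝ) [SFinite ρ] :
    κ.prod (a • ρ) = a • (κ.prod ρ) := by
  ext s hs
  rw [Measure.smul_apply, Measure.prod_apply hs, Measure.prod_apply hs]
  simp only [Measure.smul_apply, smul_eq_mul]
  rw [lintegral_const_mul' _ _ ha]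

lemma tailI_smul (a : ℝ≥0∞) (κ : Measure ℝ) (c x : ℝ) :
    tailI (a • κ) c x = a.toReal * tailI κ c x := by
  simp [tailI, Measure.smul_apply, ENNReal.toReal_mul]

lemma tailI_add (κ ρ : Measure ℝ) [IsFiniteMeasure κ] [IsFiniteMeasure ρ] (c x : ℝ) :
    tailI (κ + ρ) c x = tailI κ c x + tailI ρ c x := by
  simp [tailI, Measure.add_apply, ENNReal.toReal_add (measure_ne_top κ _) (measure_ne_top ρ _)]

lemma conv_smul_smul (a : ℝ≥0∞) (ha : a ≠ ⊤) (κ ρ : Measure ℝ) [SFinite κ] [SFinite ρ] :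
    (a • κ).conv (a • ρ) = (a * a) • (κ.conv ρ) := by
  rw [Measure.conv, prod_smul' a ha, smul_prod', Measure.conv, smul_smul,
    Measure.map_smul]

theorem sdelta_of_sdelta_plus (μ : Measure ℝ) [IsProbabilityMeasure μ]
    (c : ℝ) (hc : 0 < c) (hD : DDelta μ c) (hpos : μ (Ici 0) ≠ 0)
    (hplus : SDelta ((μ (Ici 0))⁻¹ • μ.restrict (Ici 0)) c) :
    SDelta μ c := by
  set p := μ (Ici 0) with hp
  have hpt : p ≠ ⊤ := measure_ne_top μ _
  set ν := p⁻¹ • μ.restrict (Ici 0) with hνdef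
  set μp := μ.restrict (Ici 0) with hμp
  set μm := μ.restrict (Iio 0) with hμm
  set P := p.toReal with hPdef
  have hP : (0:ℝ) < P := ENNReal.toReal_pos hpos hpt
  obtain ⟨⟨hνpos, hνrat⟩, hνconv⟩ := hplus
  -- tailI μp = tailI μ for x ≥ 0
  have key1 : ∀ x : ℝ, 0 ≤ x → tailI μp c x = tailI μ c x := by
    intro x hx
    unfold tailI
    rw [hμp, Measure.restrict_apply measurableSet_Ioc, inter_eq_self_of_subset_left]
    intro b hb
    exact le_of_lt (lt_of_le_of_lt hx hb.1)
  have key2 : ∀ x : ℝ, tailI ν c x = P⁻¹ * tailI μp c x := by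
    intro x
    rw [hνdef, tailI_smul, ENNReal.toReal_inv]
  have keyμν : ∀ x : ℝ, 0 ≤ x → tailI μ c x = P * tailI ν c x := by
    intro x hx
    rw [key2, ← key1 x hx]
    field_simp
  -- LongDelta μ
  have hLpos : ∀ᶠ x in atTop, 0 < tailI μ c x := by
    filter_upwards [hνpos, eventually_ge_atTop (0:ℝ)] with x h1 h2
    rw [keyμν x h2]; positivity
  have hLrat : ∀ y : ℝ, 0 < y →
      Tendsto (fun x => tailI μ c (x + y) / tailI μ c x) atTop (𝓝 1) := by
    intro y hy
    refine (hνrat y hy).congr' ?_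
    filter_upwards [eventually_ge_atTop (0:ℝ)] with x hx
    rw [keyμν x hx, keyμν (x + y) (by linarith), mul_div_mul_left _ _ hP.ne']
  have hLμ : LongDelta μ c := ⟨hLpos, hLrat⟩
  refine ⟨hLμ, ?_⟩
  -- decomposition of μ.conv μ
  have hsum : μp + μm = μ := by
    rw [hμp, hμm, ← compl_Ici]
    exact Measure.restrict_add_restrict_compl measurableSet_Ici
  have hdec : μ.conv μ = μp.conv μp + (μm.conv μp + μm.conv μp) + μm.conv μm := by
    conv_lhs => rw [← hsum]
    rw [Measure.conv_add, Measure.add_conv, Measure.add_conv, Measure.conv_comm μp μm]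
    abel
  -- zero term
  have hzero : ∀ x : ℝ, 0 ≤ x → tailI (μm.conv μm) c x = 0 := by
    intro x hx
    unfold tailI
    rw [conv_apply_set _ _ measurableSet_Ioc]
    have hae : ∀ᵐ a ∂μm, μm {b | a + b ∈ Ioc x (x + c)} = 0 := by
      filter_upwards [ae_restrict_mem measurableSet_Iio] with a ha
      rw [setIoc, hμm, Measure.restrict_apply measurableSet_Ioc]
      have : Ioc (x - a) ((x - a) + c) ∩ Iio 0 = ∅ := by
        rw [eq_empty_iff_forall_notMem]
        rintro b ⟨hb1, hb2⟩
        simp only [mem_Ioc] at hb1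
        simp only [mem_Iio] at hb2
        simp only [mem_Iio] at ha
        linarith [hb1.1]
      rw [this, measure_empty]
    rw [lintegral_congr_ae hae, lintegral_zero]
    simp
  -- cross term identity
  have hcross : ∀ x : ℝ, 0 ≤ x →
      tailI (μm.conv μp) c x = ∫ a, tailI μ c (x - a) ∂μm := by
    intro x hx
    have h1 : (μm.conv μp) (Ioc x (x + c)) = ∫⁻ a, μ (Ioc (x - a) ((x - a) + c)) ∂μm := by
      rw [conv_apply_set _ _ measurableSet_Ioc]
      refine lintegral_congr_ae ?_
      filter_upwards [ae_restrict_mem measurableSet_Iio] with a ha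
      rw [setIoc, hμp, Measure.restrict_apply measurableSet_Ioc,
        inter_eq_self_of_subset_left]
      intro b hb
      simp only [mem_Iio] at ha
      have := hb.1
      simp only [mem_Ici]
      linarith
    have hmeas : AEMeasurable (fun a => μ (Ioc (x - a) ((x - a) + c))) μm :=
      ((measE μ hc.le).comp (measurable_const.sub measurable_id)).aemeasurable
    have hlt : ∀ᵐ a ∂μm, μ (Ioc (x - a) ((x - a) + c)) < ⊤ :=
      Eventually.of_forall fun a => measure_lt_top μ _
    have : tailI (μm.conv μp) c x = (∫⁻ a, μ (Ioc (x - a) ((x - a) + c)) ∂μm).toReal := by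
      rw [tailI, h1]
    rw [this, ← integral_toReal hmeas hlt]
    rfl
  -- cross term limit
  have hQlim : Tendsto (fun x => tailI (μm.conv μp) c x / tailI μ c x) atTop
      (𝓝 (μ (Iio 0)).toReal) := by
    obtain ⟨x₀, hx₀, K, hK, hKb⟩ := hD
    have hDC := tendsto_integral_filter_of_dominated_convergence (μ := μm)
      (F := fun x a => tailI μ c (x - a) / tailI μ c x) (f := fun _ => (1:ℝ))
      (bound := fun _ => K)
      (Eventually.of_forall fun x =>
        (((tailI_meas μ hc.le).comp (measurable_const.sub measurable_id)).div_const
          _).aestronglyMeasurable)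
      (by
        filter_upwards [eventually_gt_atTop x₀, hLpos] with x hx hpx
        filter_upwards [ae_restrict_mem measurableSet_Iio] with a ha
        simp only [mem_Iio] at ha
        have hb : tailI μ c (x - a) ≤ K * tailI μ c x := by
          rw [sub_eq_add_neg]
          exact hKb x hx (-a) (by linarith)
        have h0 : (0:ℝ) ≤ tailI μ c (x - a) := ENNReal.toReal_nonneg
        rw [Real.norm_eq_abs, abs_of_nonneg (div_nonneg h0 hpx.le), div_le_iff₀ hpx]
        exact hb)
      (integrable_const _)
      (by
        filter_upwards [ae_restrict_mem measurableSet_Iio] with a ha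
        simp only [mem_Iio] at ha
        have := hLrat (-a) (by linarith)
        simpa [sub_eq_add_neg] using this)
    have hconst : (∫ _, (1:ℝ) ∂μm) = (μ (Iio 0)).toReal := by
      rw [integral_const, smul_eq_mul, mul_one, hμm, measureReal_def, Measure.restrict_apply_univ]
    rw [hconst] at hDC
    refine hDC.congr' ?_
    filter_upwards [eventually_ge_atTop (0:ℝ)] with x hx
    rw [integral_div, hcross x hx]
  -- main term limit
  have hννconv : ν.conv ν = (p⁻¹ * p⁻¹) • (μp.conv μp) := by
    rw [hνdef, conv_smul_smul p⁻¹ (by simp [hpos]) μp μp]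
  have hscale : ∀ x : ℝ, tailI (μp.conv μp) c x = P * (P * tailI (ν.conv ν) c x) := by
    intro x
    have e : tailI (ν.conv ν) c x = (P⁻¹ * P⁻¹) * tailI (μp.conv μp) c x := by
      rw [hννconv, tailI_smul, ENNReal.toReal_mul, ENNReal.toReal_inv]
    rw [e]
    field_simp
  have hAlim : Tendsto (fun x => tailI (μp.conv μp) c x / tailI μ c x) atTop
      (𝓝 (P * 2)) := by
    refine (hνconv.const_mul P).congr' ?_
    filter_upwards [eventually_ge_atTop (0:ℝ)] with x hx
    rw [keyμν x hx, hscale, mul_div_mul_left _ _ hP.ne', mul_div_assoc]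
  -- combine
  have hPQ : P + (μ (Iio 0)).toReal = 1 := by
    have hu : μ (Ici 0) + μ (Iio 0) = 1 := by
      rw [← measure_union (Iio_disjoint_Ici le_rfl).symm measurableSet_Iio,
        (by ext t; simp [le_or_gt] : Ici (0:ℝ) ∪ Iio 0 = univ), measure_univ]
    calc P + (μ (Iio 0)).toReal = (μ (Ici 0) + μ (Iio 0)).toReal := by
          rw [ENNReal.toReal_add hpt (measure_ne_top μ _)]
      _ = 1 := by rw [hu, ENNReal.toReal_one]
  have hev : (fun x => tailI (μp.conv μp) c x / tailI μ c x
      + 2 * (tailI (μm.conv μp) c x / tailI μ c x)) =ᶠ[atTop]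
      (fun x => tailI (μ.conv μ) c x / tailI μ c x) := by
    filter_upwards [eventually_ge_atTop (0:ℝ)] with x hx
    rw [hdec, tailI_add, tailI_add, tailI_add, hzero x hx]
    ring
  have hfin := (hAlim.add (hQlim.const_mul 2)).congr' hev
  have : P * 2 + 2 * (μ (Iio 0)).toReal = 2 := by linarith
  rwa [this] at hfin
end

section
/- Let ξ₁, ξ₂ be independent random variables with common distribution F ∈ ℒ_Δ on ℝ, Δ = (0,c]. Then F ∈ 𝒮_Δ if and only if for every function α with α(x) → ∞ and α(x) < x/2, both P(ξ₁+ξ₂ ∈ x+Δ, ξ₁ ≤ −α(x)) = o(F(x+Δ)) and P(ξ₁+ξ₂ ∈ x+Δ, ξ₁ > α(x), ξ₂ > α(x)) = o(F(x+Δ)) as x → ∞. -/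
open MeasureTheory Filter Set Topology

section Aux

set_option linter.unusedSectionVars false
set_option maxHeartbeats 1000000

variable (μ : Measure ℝ) [IsProbabilityMeasure μ] (c : ℝ)

/-- Auxiliary: mass of the event `{ξ₁+ξ₂ ∈ (x,x+c], ξ₁ ≤ -a}`. -/
noncomputable def mA (x a : ℝ) : ℝ :=
  ((μ.prod μ) {p : ℝ × ℝ | p.1 + p.2 ∈ Ioc x (x + c) ∧ p.1 ≤ -a}).toReal

/-- Auxiliary: mass of the event `{ξ₁+ξ₂ ∈ (x,x+c], -a < ξ₁ ≤ a}`. -/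
noncomputable def mB (x a : ℝ) : ℝ :=
  ((μ.prod μ) {p : ℝ × ℝ | p.1 + p.2 ∈ Ioc x (x + c) ∧ p.1 ∈ Ioc (-a) a}).toReal

/-- Auxiliary: mass of the event `{ξ₁+ξ₂ ∈ (x,x+c], ξ₁ > a, ξ₂ > a}`. -/
noncomputable def mD (x a : ℝ) : ℝ :=
  ((μ.prod μ) {p : ℝ × ℝ | p.1 + p.2 ∈ Ioc x (x + c) ∧ a < p.1 ∧ a < p.2}).toReal

lemma measSall (x : ℝ) : MeasurableSet {p : ℝ × ℝ | p.1 + p.2 ∈ Ioc x (x + c)} :=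
  (measurable_fst.add measurable_snd) measurableSet_Ioc

lemma measSA (x a : ℝ) :
    MeasurableSet {p : ℝ × ℝ | p.1 + p.2 ∈ Ioc x (x + c) ∧ p.1 ≤ -a} :=
  (measSall c x).inter (measurable_fst measurableSet_Iic)

lemma measSB (x a : ℝ) :
    MeasurableSet {p : ℝ × ℝ | p.1 + p.2 ∈ Ioc x (x + c) ∧ p.1 ∈ Ioc (-a) a} :=
  (measSall c x).inter (measurable_fst measurableSet_Ioc)

lemma measSD (x a : ℝ) :
    MeasurableSet {p : ℝ × ℝ | p.1 + p.2 ∈ Ioc x (x + c) ∧ a < p.1 ∧ a < p.2} :=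
  (measSall c x).inter
    ((measurable_fst measurableSet_Ioi).inter (measurable_snd measurableSet_Ioi))

lemma mB_mono (x : ℝ) {a b : ℝ} (hab : a ≤ b) : mB μ c x a ≤ mB μ c x b := by
  refine ENNReal.toReal_mono (measure_ne_top _ _) (measure_mono ?_)
  exact fun p hp => ⟨hp.1, Ioc_subset_Ioc (neg_le_neg hab) hab hp.2⟩

lemma tail_shift (hL : LongDelta μ c) (y : ℝ) :
    Tendsto (fun x => tailI μ c (x + y) / tailI μ c x) atTop (𝓝 1) := by
  rcases lt_trichotomy 0 y with hy | hy | hy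
  · exact hL.2 y hy
  · subst hy
    exact Tendsto.congr' (hL.1.mono fun x hx => by simp [div_self hx.ne']) tendsto_const_nhds
  · have h1 : Tendsto (fun x => tailI μ c (x + y + -y) / tailI μ c (x + y)) atTop (𝓝 1) :=
      (hL.2 (-y) (by linarith)).comp (tendsto_atTop_add_const_right atTop y tendsto_id)
    have h2 := h1.inv₀ one_ne_zero
    rw [inv_one] at h2
    refine h2.congr fun x => ?_
    rw [inv_div, add_neg_cancel_right]

lemma meas_tail : Measurable fun a : ℝ => μ (Ioc a (a + c)) := by
  have hs : MeasurableSet {p : ℝ × ℝ | p.1 < p.2 ∧ p.2 ≤ p.1 + c} :=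
    (measurableSet_lt measurable_fst measurable_snd).inter
      (measurableSet_le measurable_snd (measurable_fst.add_const c))
  have h2 : (fun a : ℝ => μ (Ioc a (a + c))) =
      fun a => μ (Prod.mk a ⁻¹' {p : ℝ × ℝ | p.1 < p.2 ∧ p.2 ≤ p.1 + c}) := rfl
  rw [h2]
  exact measurable_measure_prodMk_left hs

lemma Ioc_measure_le (hc : 0 < c) (n : ℕ) (a : ℝ) :
    μ (Ioc a (a + n * c)) ≤ ∑ k ∈ Finset.range n, μ (Ioc (a + k * c) (a + k * c + c)) := by
  induction n with
  | zero => simp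
  | succ n ih =>
    have hsub : Ioc a (a + (n + 1 : ℕ) * c) ⊆
        Ioc a (a + n * c) ∪ Ioc (a + n * c) (a + n * c + c) := by
      have : (a + (n + 1 : ℕ) * c) = (a + n * c) + c := by push_cast; ring
      rw [this, Ioc_union_Ioc_eq_Ioc (le_add_of_nonneg_right (by positivity))
        (le_add_of_nonneg_right hc.le)]
    calc μ (Ioc a (a + (n + 1 : ℕ) * c))
        ≤ μ (Ioc a (a + n * c)) + μ (Ioc (a + n * c) (a + n * c + c)) :=
          le_trans (measure_mono hsub) (measure_union_le _ _)
      _ ≤ _ := by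
          rw [Finset.sum_range_succ]
          exact add_le_add ih (le_refl _)

lemma keyB (hc : 0 < c) (hL : LongDelta μ c) (M : ℝ) :
    Tendsto (fun x => mB μ c x M / tailI μ c x) atTop (𝓝 ((μ (Ioc (-M) M)).toReal)) := by
  set K := ⌈2 * M / c⌉₊ with hK
  have hrepr : ∀ x : ℝ, mB μ c x M = ∫ y in Ioc (-M) M, tailI μ c (x - y) ∂μ := by
    intro x
    have hS := measSB c x M
    have h1 : (μ.prod μ) {p : ℝ × ℝ | p.1 + p.2 ∈ Ioc x (x + c) ∧ p.1 ∈ Ioc (-M) M}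
        = ∫⁻ y, ((Ioc (-M) M).indicator (fun y => μ (Ioc (x - y) (x - y + c)))) y ∂μ := by
      rw [Measure.prod_apply hS]
      refine lintegral_congr fun y => ?_
      by_cases hy : y ∈ Ioc (-M) M
      · rw [Set.indicator_of_mem hy]
        congr 1
        ext z
        simp only [Set.mem_preimage, Set.mem_setOf_eq, Set.mem_Ioc]
        constructor
        · rintro ⟨⟨ha, hb⟩, -⟩; exact ⟨by linarith, by linarith⟩
        · rintro ⟨ha, hb⟩; exact ⟨⟨by linarith, by linarith⟩, hy⟩
      · rw [Set.indicator_of_notMem hy]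
        have he : Prod.mk y ⁻¹' {p : ℝ × ℝ | p.1 + p.2 ∈ Ioc x (x + c) ∧ p.1 ∈ Ioc (-M) M}
            = (∅ : Set ℝ) := eq_empty_iff_forall_notMem.2 fun z hz => hy hz.2
        rw [he, measure_empty]
    rw [mB, h1, lintegral_indicator measurableSet_Ioc _, ← integral_toReal]
    · rfl
    · exact ((meas_tail μ c).comp (measurable_const.sub measurable_id)).aemeasurable
    · exact ae_of_all _ fun y => measure_lt_top μ _
  have hsum : Tendsto
      (fun x => (∑ k ∈ Finset.range (K + 1), tailI μ c (x + (-M + k * c))) / tailI μ c x)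
      atTop (𝓝 ((K : ℝ) + 1)) := by
    have h := tendsto_finset_sum (Finset.range (K + 1))
      (fun k (_ : k ∈ Finset.range (K + 1)) => tail_shift μ c hL (-M + k * c))
    simp only [Finset.sum_const, Finset.card_range, nsmul_eq_mul, mul_one] at h
    have h2 := h.congr (fun x => (Finset.sum_div _ _ _).symm)
    convert h2 using 2
    push_cast; ring
  have hub : ∀ᶠ x in atTop, ∀ᵐ y ∂(μ.restrict (Ioc (-M) M)),
      ‖tailI μ c (x - y) / tailI μ c x‖ ≤ ((K : ℝ) + 2) := by
    have h2 : ∀ᶠ x in atTop,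
        (∑ k ∈ Finset.range (K + 1), tailI μ c (x + (-M + k * c))) / tailI μ c x
          < (K : ℝ) + 2 :=
      hsum.eventually_lt_const (by linarith)
    filter_upwards [h2, hL.1] with x hx hT
    refine (ae_restrict_iff' measurableSet_Ioc).2 (ae_of_all _ fun y hy => ?_)
    have hcK : 2 * M ≤ (K : ℝ) * c := by
      have h3 := Nat.le_ceil (2 * M / c)
      have h4 : (2 * M / c) * c ≤ (K : ℝ) * c :=
        mul_le_mul_of_nonneg_right h3 hc.le
      rwa [div_mul_cancel₀ _ hc.ne'] at h4
    have hsub : Ioc (x - y) (x - y + c) ⊆ Ioc (x - M) ((x - M) + (K + 1 : ℕ) * c) := by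
      apply Ioc_subset_Ioc
      · linarith [hy.2]
      · push_cast
        linarith [hy.1]
    have hle : tailI μ c (x - y)
        ≤ ∑ k ∈ Finset.range (K + 1), tailI μ c (x + (-M + k * c)) := by
      have e1 : μ (Ioc (x - y) (x - y + c))
          ≤ ∑ k ∈ Finset.range (K + 1), μ (Ioc ((x - M) + k * c) ((x - M) + k * c + c)) :=
        le_trans (measure_mono hsub) (Ioc_measure_le μ c hc (K + 1) (x - M))
      have hnt : (∑ k ∈ Finset.range (K + 1),
          μ (Ioc ((x - M) + k * c) ((x - M) + k * c + c))) ≠ ⊤ :=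
        (ENNReal.sum_lt_top.2 fun k _ => measure_lt_top μ _).ne
      calc tailI μ c (x - y)
          ≤ (∑ k ∈ Finset.range (K + 1),
              μ (Ioc ((x - M) + k * c) ((x - M) + k * c + c))).toReal :=
            ENNReal.toReal_mono hnt e1
        _ = ∑ k ∈ Finset.range (K + 1),
              (μ (Ioc ((x - M) + k * c) ((x - M) + k * c + c))).toReal :=
            ENNReal.toReal_sum fun k _ => measure_ne_top _ _
        _ = ∑ k ∈ Finset.range (K + 1), tailI μ c (x + (-M + k * c)) := by
            refine Finset.sum_congr rfl fun k _ => ?_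
            have harg : (x - M) + k * c = x + (-M + k * c) := by ring
            rw [harg, tailI]
    have h0 : (0 : ℝ) ≤ tailI μ c (x - y) := ENNReal.toReal_nonneg
    rw [Real.norm_of_nonneg (div_nonneg h0 hT.le)]
    calc tailI μ c (x - y) / tailI μ c x
        ≤ (∑ k ∈ Finset.range (K + 1), tailI μ c (x + (-M + k * c))) / tailI μ c x :=
          (div_le_div_iff_of_pos_right hT).2 hle
      _ ≤ (K : ℝ) + 2 := hx.le
  have hint := tendsto_integral_filter_of_dominated_convergence
      (μ := μ.restrict (Ioc (-M) M)) (l := (atTop : Filter ℝ))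
      (F := fun x y => tailI μ c (x - y) / tailI μ c x) (f := fun _ => (1 : ℝ))
      (bound := fun _ => (K : ℝ) + 2)
      (Eventually.of_forall fun x =>
        ((((meas_tail μ c).comp (measurable_const.sub measurable_id)).ennreal_toReal).div_const
          _).aestronglyMeasurable)
      hub (integrable_const _)
      (ae_of_all _ fun y =>
        (tail_shift μ c hL (-y)).congr fun x => by rw [← sub_eq_add_neg])
  have hone : (∫ _ in Ioc (-M) M, (1 : ℝ) ∂μ) = (μ (Ioc (-M) M)).toReal := by simp [measureReal_def]
  rw [hone] at hint
  refine hint.congr fun x => ?_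
  rw [integral_div, ← hrepr x]

lemma decompose (x a : ℝ) (ha : 0 ≤ a) (hax : 2 * a < x) :
    tailI (μ.conv μ) c x = 2 * mA μ c x a + 2 * mB μ c x a + mD μ c x a := by
  set SA := {p : ℝ × ℝ | p.1 + p.2 ∈ Ioc x (x + c) ∧ p.1 ≤ -a} with hSA
  set SB := {p : ℝ × ℝ | p.1 + p.2 ∈ Ioc x (x + c) ∧ p.1 ∈ Ioc (-a) a} with hSB
  set SC := {p : ℝ × ℝ | p.1 + p.2 ∈ Ioc x (x + c) ∧ a < p.1 ∧ p.2 ≤ a} with hSC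
  set SD := {p : ℝ × ℝ | p.1 + p.2 ∈ Ioc x (x + c) ∧ a < p.1 ∧ a < p.2} with hSD
  have measSC : MeasurableSet SC :=
    (measSall c x).inter
      ((measurable_fst measurableSet_Ioi).inter (measurable_snd measurableSet_Iic))
  have hconv : (μ.conv μ) (Ioc x (x + c))
      = (μ.prod μ) {p : ℝ × ℝ | p.1 + p.2 ∈ Ioc x (x + c)} := by
    rw [Measure.conv, Measure.map_apply measurable_add measurableSet_Ioc]
    rfl
  have hpart : {p : ℝ × ℝ | p.1 + p.2 ∈ Ioc x (x + c)} = (SA ∪ SB ∪ SC) ∪ SD := by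
    ext p
    simp only [hSA, hSB, hSC, hSD, Set.mem_union, Set.mem_setOf_eq, Set.mem_Ioc]
    constructor
    · intro h
      by_cases h1 : p.1 ≤ -a
      · exact Or.inl (Or.inl (Or.inl ⟨h, h1⟩))
      · by_cases h2 : p.1 ≤ a
        · exact Or.inl (Or.inl (Or.inr ⟨h, by push_neg at h1; exact h1, h2⟩))
        · push_neg at h2
          by_cases h3 : p.2 ≤ a
          · exact Or.inl (Or.inr ⟨h, h2, h3⟩)
          · push_neg at h3
            exact Or.inr ⟨h, h2, h3⟩
    · rintro ((⟨h, -⟩ | ⟨h, -⟩) | ⟨h, -⟩) <;> try exact h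
      · rename_i hh
        exact hh.1
  have hdisj1 : Disjoint SA SB := by
    rw [Set.disjoint_left]
    rintro p ⟨-, h1⟩ ⟨-, h2, -⟩
    linarith
  have hdisj2 : Disjoint (SA ∪ SB) SC := by
    rw [Set.disjoint_left]
    rintro p (⟨-, h1⟩ | ⟨-, -, h1⟩) ⟨-, h2, -⟩ <;> linarith
  have hdisj3 : Disjoint (SA ∪ SB ∪ SC) SD := by
    rw [Set.disjoint_left]
    rintro p ((⟨-, h1⟩ | ⟨-, -, h1⟩) | ⟨-, -, h1⟩) ⟨-, h2, h3⟩ <;> linarith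
  have hCeq : (μ.prod μ) SC = (μ.prod μ) SA + (μ.prod μ) SB := by
    have h1 : SC = {p : ℝ × ℝ | p.1 + p.2 ∈ Ioc x (x + c) ∧ p.2 ≤ a} := by
      ext p
      simp only [hSC, Set.mem_setOf_eq, Set.mem_Ioc]
      constructor
      · rintro ⟨h, -, h2⟩; exact ⟨h, h2⟩
      · rintro ⟨h, h2⟩
        refine ⟨h, by linarith [h.1], h2⟩
    have h2 : {p : ℝ × ℝ | p.1 + p.2 ∈ Ioc x (x + c) ∧ p.2 ≤ a}
        = Prod.swap ⁻¹' {p : ℝ × ℝ | p.1 + p.2 ∈ Ioc x (x + c) ∧ p.1 ≤ a} := by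
      ext p
      simp only [Set.mem_preimage, Set.mem_setOf_eq, Prod.fst_swap, Prod.snd_swap, add_comm]
    have hmeas3 : MeasurableSet {p : ℝ × ℝ | p.1 + p.2 ∈ Ioc x (x + c) ∧ p.1 ≤ a} :=
      (measSall c x).inter (measurable_fst measurableSet_Iic)
    have h3 : (μ.prod μ) SC
        = (μ.prod μ) {p : ℝ × ℝ | p.1 + p.2 ∈ Ioc x (x + c) ∧ p.1 ≤ a} := by
      rw [h1, h2, ← Measure.map_apply measurable_swap hmeas3, Measure.prod_swap]
    have h4 : {p : ℝ × ℝ | p.1 + p.2 ∈ Ioc x (x + c) ∧ p.1 ≤ a} = SA ∪ SB := by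
      ext p
      simp only [hSA, hSB, Set.mem_union, Set.mem_setOf_eq, Set.mem_Ioc]
      constructor
      · rintro ⟨h, h2⟩
        by_cases h1 : p.1 ≤ -a
        · exact Or.inl ⟨h, h1⟩
        · push_neg at h1; exact Or.inr ⟨h, h1, h2⟩
      · rintro (⟨h, h1⟩ | ⟨h, h1, h2⟩)
        · exact ⟨h, by linarith⟩
        · exact ⟨h, h2⟩
    rw [h3, h4, measure_union hdisj1 (measSB c x a)]
  have htot : (μ.conv μ) (Ioc x (x + c))
      = ((μ.prod μ) SA + (μ.prod μ) SB + ((μ.prod μ) SA + (μ.prod μ) SB)) + (μ.prod μ) SD := by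
    rw [hconv, hpart, measure_union hdisj3 (measSD c x a),
      measure_union hdisj2 measSC,
      measure_union hdisj1 (measSB c x a), hCeq]
  have hAnt : (μ.prod μ) SA ≠ ⊤ := measure_ne_top _ _
  have hBnt : (μ.prod μ) SB ≠ ⊤ := measure_ne_top _ _
  have hDnt : (μ.prod μ) SD ≠ ⊤ := measure_ne_top _ _
  rw [tailI, htot]
  rw [ENNReal.toReal_add (by finiteness) hDnt, ENNReal.toReal_add (by finiteness) (by finiteness),
    ENNReal.toReal_add hAnt hBnt]
  rw [mA, mB, mD]
  ring

lemma Ltend : Tendsto (fun n : ℕ => (μ (Ioc (-(n : ℝ)) n)).toReal) atTop (𝓝 1) := by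
  have hmono : Monotone fun n : ℕ => Ioc (-(n : ℝ)) (n : ℝ) := fun m n hmn =>
    Ioc_subset_Ioc (neg_le_neg (Nat.cast_le.2 hmn)) (Nat.cast_le.2 hmn)
  have h1 := tendsto_measure_iUnion_atTop (μ := μ) hmono
  have hU : (⋃ n : ℕ, Ioc (-(n : ℝ)) (n : ℝ)) = univ := by
    ext z
    simp only [Set.mem_iUnion, Set.mem_Ioc, Set.mem_univ, iff_true]
    obtain ⟨n, hn⟩ := exists_nat_gt |z|
    exact ⟨n, by cases abs_lt.1 hn with | intro h1 h2 => exact by linarith,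
      by linarith [(abs_lt.1 hn).2]⟩
  rw [hU, measure_univ] at h1
  have h2 := (ENNReal.tendsto_toReal (by simp : (1 : ENNReal) ≠ ⊤)).comp h1
  exact h2

lemma diag (hc : 0 < c) (hL : LongDelta μ c) :
    ∃ β : ℝ → ℝ, Tendsto β atTop atTop ∧ (∀ x, β x < x / 2) ∧
      Tendsto (fun x => mB μ c x (β x) / tailI μ c x) atTop (𝓝 1) := by
  classical
  have hchoice : ∀ n : ℕ, ∃ z : ℝ, ∀ x ≥ z,
      |mB μ c x n / tailI μ c x - (μ (Ioc (-(n : ℝ)) n)).toReal| < 1 / (n + 1) := by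
    intro n
    have h := (keyB μ c hc hL n).eventually
      (Metric.ball_mem_nhds ((μ (Ioc (-(n : ℝ)) n)).toReal)
        (by positivity : (0 : ℝ) < 1 / (n + 1)))
    rw [eventually_atTop] at h
    obtain ⟨z, hz⟩ := h
    exact ⟨z, fun x hx => by simpa [Real.dist_eq] using hz x hx⟩
  choose f hf using hchoice
  set g : ℕ → ℝ := fun n => 2 * n + 4 + ∑ k ∈ Finset.range (n + 1), max (f k) 0 with hg
  have hsum_mono : ∀ {m n : ℕ}, m ≤ n →
      (∑ k ∈ Finset.range (m + 1), max (f k) 0) ≤ ∑ k ∈ Finset.range (n + 1), max (f k) 0 :=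
    fun {m n} hmn => Finset.sum_le_sum_of_subset_of_nonneg
      (Finset.range_subset_range.2 (by omega)) (fun k _ _ => le_max_right _ _)
  have hgmono : Monotone g := by
    intro m n hmn
    have : (2 : ℝ) * m + 4 ≤ 2 * n + 4 := by
      have := (Nat.cast_le (α := ℝ)).2 hmn; linarith
    exact add_le_add this (hsum_mono hmn)
  have hgf : ∀ n, f n ≤ g n := by
    intro n
    have h1 : max (f n) 0 ≤ ∑ k ∈ Finset.range (n + 1), max (f k) 0 :=
      Finset.single_le_sum (f := fun k => max (f k) 0) (fun k _ => le_max_right _ _)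
        (Finset.self_mem_range_succ n)
    have h2 : (0 : ℝ) ≤ 2 * n + 4 := by positivity
    calc f n ≤ max (f n) 0 := le_max_left _ _
      _ ≤ _ := by rw [hg]; dsimp only; linarith
  have hgn : ∀ n : ℕ, 2 * (n : ℝ) + 4 ≤ g n := by
    intro n
    have h1 : (0 : ℝ) ≤ ∑ k ∈ Finset.range (n + 1), max (f k) 0 :=
      Finset.sum_nonneg fun k _ => le_max_right _ _
    rw [hg]; dsimp only; linarith
  set β : ℝ → ℝ := fun x =>
    if g 0 ≤ x then ((Nat.findGreatest (fun n => g n ≤ x) ⌈x⌉₊ : ℕ) : ℝ) else x / 2 - 1 with hβ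
  have hkey : ∀ (n : ℕ) (x : ℝ), g n ≤ x → n ≤ ⌈x⌉₊ := by
    intro n x hx
    have h1 : (n : ℝ) ≤ x := by have := hgn n; linarith
    calc n = ⌈(n : ℝ)⌉₊ := (Nat.ceil_natCast n).symm
      _ ≤ ⌈x⌉₊ := Nat.ceil_mono h1
  have hβval : ∀ x, g 0 ≤ x → ∀ n : ℕ, g n ≤ x →
      (n ≤ Nat.findGreatest (fun n => g n ≤ x) ⌈x⌉₊ ∧
       g (Nat.findGreatest (fun n => g n ≤ x) ⌈x⌉₊) ≤ x) := by
    intro x hx0 n hn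
    exact ⟨Nat.le_findGreatest (hkey n x hn) hn,
      Nat.findGreatest_spec (P := fun n => g n ≤ x) (hkey 0 x hx0) hx0⟩
  refine ⟨β, ?_, ?_, ?_⟩
  · rw [tendsto_atTop]
    intro b
    obtain ⟨K, hK⟩ := exists_nat_ge b
    filter_upwards [eventually_ge_atTop (g K)] with x hx
    have hx0 : g 0 ≤ x := le_trans (hgmono (Nat.zero_le K)) hx
    obtain ⟨h1, -⟩ := hβval x hx0 K hx
    rw [hβ]; dsimp only
    rw [if_pos hx0]
    calc b ≤ (K : ℝ) := hK
      _ ≤ _ := Nat.cast_le.2 h1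
  · intro x
    rw [hβ]; dsimp only
    split_ifs with hx0
    · set m := Nat.findGreatest (fun n => g n ≤ x) ⌈x⌉₊ with hm
      obtain ⟨-, h2⟩ := hβval x hx0 0 hx0
      have := hgn m
      have hmx : g m ≤ x := h2
      nlinarith
    · linarith
  · rw [Metric.tendsto_atTop]
    intro ε hε
    obtain ⟨N1, hN1⟩ := Metric.tendsto_atTop.1 (Ltend μ) (ε / 2) (by linarith)
    obtain ⟨N2, hN2⟩ := exists_nat_one_div_lt (show (0 : ℝ) < ε / 2 by linarith)
    set N := max N1 N2 with hN
    refine ⟨g N, fun x hx => ?_⟩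
    have hx0 : g 0 ≤ x := le_trans (hgmono (Nat.zero_le N)) hx
    set m := Nat.findGreatest (fun n => g n ≤ x) ⌈x⌉₊ with hm
    obtain ⟨h1, h2⟩ := hβval x hx0 N hx
    have hfm : x ≥ f m := le_trans (hgf m) h2
    have hd1 := hf m x hfm
    have hd2 := hN1 m (le_trans (le_max_left _ _) h1)
    have hd3 : 1 / ((m : ℝ) + 1) ≤ 1 / ((N2 : ℝ) + 1) := by
      have : (N2 : ℝ) ≤ m := Nat.cast_le.2 (le_trans (le_max_right _ _) h1)
      apply one_div_le_one_div_of_le <;> linarith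
    have hβx : β x = (m : ℝ) := by rw [hβ]; dsimp only; rw [if_pos hx0]
    rw [hβx, Real.dist_eq]
    rw [Real.dist_eq] at hd2
    have := abs_sub_lt_iff.1 hd1
    have := abs_sub_lt_iff.1 hd2
    rw [abs_sub_lt_iff]
    constructor <;> nlinarith [hN2]

end Aux

theorem sdelta_iff_negligible (μ : Measure ℝ) [IsProbabilityMeasure μ]
    (c : ℝ) (hc : 0 < c) (hL : LongDelta μ c) :
    SDelta μ c ↔
      ∀ α : ℝ → ℝ, Tendsto α atTop atTop → (∀ x, α x < x / 2) →
        (Tendsto (fun x =>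
            ((μ.prod μ) {p : ℝ × ℝ | p.1 + p.2 ∈ Ioc x (x + c) ∧ p.1 ≤ -α x}).toReal
              / tailI μ c x) atTop (𝓝 0) ∧
         Tendsto (fun x =>
            ((μ.prod μ) {p : ℝ × ℝ | p.1 + p.2 ∈ Ioc x (x + c) ∧ α x < p.1 ∧ α x < p.2}).toReal
              / tailI μ c x) atTop (𝓝 0)) := by
  constructor
  · rintro ⟨-, h2⟩ α hα hα2
    have hdec : ∀ᶠ x in atTop,
        tailI (μ.conv μ) c x = 2 * mA μ c x (α x) + 2 * mB μ c x (α x) + mD μ c x (α x) := by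
      filter_upwards [hα.eventually_ge_atTop 0] with x hx
      exact decompose μ c x (α x) hx (by linarith [hα2 x])
    have hBα : Tendsto (fun x => mB μ c x (α x) / tailI μ c x) atTop (𝓝 1) := by
      rw [Metric.tendsto_atTop]
      intro ε hε
      obtain ⟨n, hn⟩ :=
        ((Ltend μ).eventually (Metric.ball_mem_nhds 1 (by linarith : (0:ℝ) < ε / 2))).exists
      have hlow := (keyB μ c hc hL n).eventually
        (Metric.ball_mem_nhds _ (by linarith : (0:ℝ) < ε / 2))
      have hup := h2.eventually (Metric.ball_mem_nhds 2 (by linarith : (0:ℝ) < ε))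
      have hcomb : ∀ᶠ x in atTop, dist (mB μ c x (α x) / tailI μ c x) 1 < ε := by
        filter_upwards [hlow, hup, hdec, hα.eventually_ge_atTop (n : ℝ), hL.1]
          with x hl hu hd hαn hT
        rw [Real.dist_eq] at hl hu ⊢
        rw [Real.dist_eq] at hn
        have hA0 : (0 : ℝ) ≤ mA μ c x (α x) := ENNReal.toReal_nonneg
        have hD0 : (0 : ℝ) ≤ mD μ c x (α x) := ENNReal.toReal_nonneg
        have hBmono : mB μ c x (n : ℝ) ≤ mB μ c x (α x) := mB_mono μ c x hαn
        have hlower : 1 - ε < mB μ c x (α x) / tailI μ c x := by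
          have e1 := abs_sub_lt_iff.1 hl
          have e2 := abs_sub_lt_iff.1 hn
          have e3 : mB μ c x (n : ℝ) / tailI μ c x ≤ mB μ c x (α x) / tailI μ c x :=
            (div_le_div_iff_of_pos_right hT).2 hBmono
          linarith
        have hupper : mB μ c x (α x) / tailI μ c x < 1 + ε := by
          have e1 : mB μ c x (α x) ≤ tailI (μ.conv μ) c x / 2 := by linarith
          have e2 : mB μ c x (α x) / tailI μ c x
              ≤ (tailI (μ.conv μ) c x / 2) / tailI μ c x :=
            (div_le_div_iff_of_pos_right hT).2 e1
          have e3 : (tailI (μ.conv μ) c x / 2) / tailI μ c x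
              = (tailI (μ.conv μ) c x / tailI μ c x) / 2 := by ring
          have e4 := abs_sub_lt_iff.1 hu
          rw [e3] at e2
          linarith
        rw [abs_sub_lt_iff]
        constructor <;> linarith
      rw [eventually_atTop] at hcomb
      exact hcomb
    have hq : Tendsto (fun x =>
        tailI (μ.conv μ) c x / tailI μ c x - 2 * (mB μ c x (α x) / tailI μ c x))
        atTop (𝓝 0) := by
      have := h2.sub (hBα.const_mul 2)
      norm_num at this
      exact this
    have hAD : Tendsto
        (fun x => (2 * mA μ c x (α x) + mD μ c x (α x)) / tailI μ c x) atTop (𝓝 0) := by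
      refine Tendsto.congr' ?_ hq
      filter_upwards [hdec] with x hx
      rw [hx]; ring
    constructor
    · show Tendsto (fun x => mA μ c x (α x) / tailI μ c x) atTop (𝓝 0)
      refine tendsto_of_tendsto_of_tendsto_of_le_of_le' tendsto_const_nhds hAD ?_ ?_
      · refine Eventually.of_forall fun x => ?_
        have h0 : (0 : ℝ) ≤ mA μ c x (α x) := ENNReal.toReal_nonneg
        have h1 : (0 : ℝ) ≤ tailI μ c x := ENNReal.toReal_nonneg
        exact div_nonneg h0 h1
      · filter_upwards [hL.1] with x hT
        have hD0 : (0 : ℝ) ≤ mD μ c x (α x) := ENNReal.toReal_nonneg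
        have hA0 : (0 : ℝ) ≤ mA μ c x (α x) := ENNReal.toReal_nonneg
        exact (div_le_div_iff_of_pos_right hT).2 (by linarith)
    · show Tendsto (fun x => mD μ c x (α x) / tailI μ c x) atTop (𝓝 0)
      refine tendsto_of_tendsto_of_tendsto_of_le_of_le' tendsto_const_nhds hAD ?_ ?_
      · refine Eventually.of_forall fun x => ?_
        have h0 : (0 : ℝ) ≤ mD μ c x (α x) := ENNReal.toReal_nonneg
        have h1 : (0 : ℝ) ≤ tailI μ c x := ENNReal.toReal_nonneg
        exact div_nonneg h0 h1
      · filter_upwards [hL.1] with x hT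
        have hD0 : (0 : ℝ) ≤ mD μ c x (α x) := ENNReal.toReal_nonneg
        have hA0 : (0 : ℝ) ≤ mA μ c x (α x) := ENNReal.toReal_nonneg
        exact (div_le_div_iff_of_pos_right hT).2 (by linarith)
  · intro H
    refine ⟨hL, ?_⟩
    obtain ⟨β, hβtop, hβ2, hBβ⟩ := diag μ c hc hL
    obtain ⟨hA, hD⟩ := H β hβtop hβ2
    have hA' : Tendsto (fun x => mA μ c x (β x) / tailI μ c x) atTop (𝓝 0) := hA
    have hD' : Tendsto (fun x => mD μ c x (β x) / tailI μ c x) atTop (𝓝 0) := hD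
    have hdec : ∀ᶠ x in atTop,
        tailI (μ.conv μ) c x = 2 * mA μ c x (β x) + 2 * mB μ c x (β x) + mD μ c x (β x) := by
      filter_upwards [hβtop.eventually_ge_atTop 0] with x hx
      exact decompose μ c x (β x) hx (by linarith [hβ2 x])
    have hsum : Tendsto (fun x =>
        2 * (mA μ c x (β x) / tailI μ c x) + 2 * (mB μ c x (β x) / tailI μ c x)
          + mD μ c x (β x) / tailI μ c x) atTop (𝓝 (2 * 0 + 2 * 1 + 0)) :=
      ((hA'.const_mul 2).add (hBβ.const_mul 2)).add hD'
    norm_num at hsum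
    refine Tendsto.congr' ?_ hsum
    filter_upwards [hdec] with x hx
    rw [hx]; ring
end

section
/- (Convolution closure.) Let Δ = (0,c] and suppose F ∈ 𝒮_Δ ∩ 𝒟_Δ. If G₁, G₂ are distributions with G₁(x+Δ)/F(x+Δ) → c₁ ≥ 0 and G₂(x+Δ)/F(x+Δ) → c₂ ≥ 0, then (G₁*G₂)(x+Δ)/F(x+Δ) → c₁ + c₂ as x → ∞; moreover if c₁ + c₂ > 0 then G₁*G₂ ∈ 𝒮_Δ. -/
open MeasureTheory Filter Set Topology

namespace CCS

lemma measure_Ioc_eq (ν : Measure ℝ) [IsFiniteMeasure ν] (a b : ℝ) :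
    ν (Ioc a b) = ν (Iic b) - ν (Iic a) := by
  by_cases hab : a ≤ b
  · rw [← Iic_sdiff_Iic,
      measure_diff (Iic_subset_Iic.2 hab) measurableSet_Iic.nullMeasurableSet (measure_ne_top ν _)]
  · rw [Ioc_eq_empty (fun h => hab h.le), measure_empty, eq_comm, tsub_eq_zero_iff_le]
    exact measure_mono (Iic_subset_Iic.2 (le_of_not_ge hab))

lemma measurable_meas_Ioc (ν : Measure ℝ) [IsFiniteMeasure ν] (c : ℝ) :
    Measurable (fun t => ν (Ioc t (t + c))) := by
  have h1 : Monotone (fun t : ℝ => ν (Iic t)) := fun a b hab => measure_mono (Iic_subset_Iic.2 hab)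
  have h2 : Measurable (fun t : ℝ => ν (Iic t)) := h1.measurable
  simp_rw [measure_Ioc_eq ν]
  exact (h2.comp (measurable_id.add_const c)).sub h2

lemma measurable_tailI (ν : Measure ℝ) [IsFiniteMeasure ν] (c : ℝ) :
    Measurable (tailI ν c) :=
  ENNReal.measurable_toReal.comp (measurable_meas_Ioc ν c)

lemma set_eq (s t : Set ℝ) (c x : ℝ) :
    {p : ℝ × ℝ | p.1 ∈ s ∧ p.2 ∈ t ∧ p.1 + p.2 ∈ Ioc x (x + c)}
      = (s ×ˢ t) ∩ ((fun p : ℝ × ℝ => p.1 + p.2) ⁻¹' Ioc x (x + c)) := by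
  ext p; simp [Set.mem_prod, and_assoc]

lemma meas_set (s t : Set ℝ) (hs : MeasurableSet s) (ht : MeasurableSet t) (c x : ℝ) :
    MeasurableSet {p : ℝ × ℝ | p.1 ∈ s ∧ p.2 ∈ t ∧ p.1 + p.2 ∈ Ioc x (x + c)} := by
  rw [set_eq]
  exact (hs.prod ht).inter (measurable_add measurableSet_Ioc)

lemma slice_fst (μ ν : Measure ℝ) [SFinite ν] (s t : Set ℝ) (hs : MeasurableSet s)
    (ht : MeasurableSet t) (c x : ℝ) :
    (μ.prod ν) {p : ℝ × ℝ | p.1 ∈ s ∧ p.2 ∈ t ∧ p.1 + p.2 ∈ Ioc x (x + c)}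
      = ∫⁻ y in s, ν (t ∩ Ioc (x - y) (x - y + c)) ∂μ := by
  rw [Measure.prod_apply (meas_set s t hs ht c x), ← lintegral_indicator hs]
  refine lintegral_congr fun y => ?_
  by_cases hy : y ∈ s
  · rw [indicator_of_mem hy]
    congr 1
    ext z
    simp only [mem_preimage, mem_setOf_eq, hy, true_and, mem_inter_iff, mem_Ioc]
    constructor
    · rintro ⟨h1, h2, h3⟩; exact ⟨h1, by linarith, by linarith⟩
    · rintro ⟨h1, h2, h3⟩; exact ⟨h1, by linarith, by linarith⟩
  · rw [indicator_of_notMem hy]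
    convert measure_empty (μ := ν)
    ext z; simp [hy]

lemma slice_snd (μ ν : Measure ℝ) [SFinite μ] [SFinite ν] (s t : Set ℝ) (hs : MeasurableSet s)
    (ht : MeasurableSet t) (c x : ℝ) :
    (μ.prod ν) {p : ℝ × ℝ | p.1 ∈ s ∧ p.2 ∈ t ∧ p.1 + p.2 ∈ Ioc x (x + c)}
      = ∫⁻ z in t, μ (s ∩ Ioc (x - z) (x - z + c)) ∂ν := by
  rw [Measure.prod_apply_symm (meas_set s t hs ht c x), ← lintegral_indicator ht]
  refine lintegral_congr fun z => ?_
  by_cases hz : z ∈ t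
  · rw [indicator_of_mem hz]
    congr 1
    ext y
    simp only [mem_preimage, mem_setOf_eq, hz, true_and, mem_inter_iff, mem_Ioc]
    constructor
    · rintro ⟨h1, h2, h3⟩; exact ⟨h1, by linarith, by linarith⟩
    · rintro ⟨h1, h2, h3⟩; exact ⟨h1, by linarith, by linarith⟩
  · rw [indicator_of_notMem hz]
    convert measure_empty (μ := μ)
    ext y; simp [hz]

lemma conv_mass (μ ν : Measure ℝ) [SFinite μ] [SFinite ν] (c x : ℝ) :
    (μ.conv ν) (Ioc x (x + c)) = (μ.prod ν) {p : ℝ × ℝ | p.1 + p.2 ∈ Ioc x (x + c)} := by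
  rw [Measure.conv, Measure.map_apply measurable_add measurableSet_Ioc]
  rfl

lemma partition (μ ν : Measure ℝ) [SFinite μ] [SFinite ν] (T c x : ℝ) :
    (μ.prod ν) {p : ℝ × ℝ | p.1 + p.2 ∈ Ioc x (x + c)}
      = (μ.prod ν) {p : ℝ × ℝ | p.1 ∈ Iic T ∧ p.2 ∈ univ ∧ p.1 + p.2 ∈ Ioc x (x + c)}
      + (μ.prod ν) {p : ℝ × ℝ | p.1 ∈ Ioi T ∧ p.2 ∈ Iic T ∧ p.1 + p.2 ∈ Ioc x (x + c)}
      + (μ.prod ν) {p : ℝ × ℝ | p.1 ∈ Ioi T ∧ p.2 ∈ Ioi T ∧ p.1 + p.2 ∈ Ioc x (x + c)} := by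
  rw [← measure_union ?d1 (meas_set _ _ measurableSet_Ioi measurableSet_Iic c x),
      ← measure_union ?d2 (meas_set _ _ measurableSet_Ioi measurableSet_Ioi c x)]
  case d1 =>
    refine Set.disjoint_left.2 fun p hp hp' => ?_
    exact absurd (mem_Ioi.1 hp'.1) (not_lt.2 (mem_Iic.1 hp.1))
  case d2 =>
    refine Set.disjoint_left.2 fun p hp hp' => ?_
    rcases hp with hp | hp
    · exact absurd (mem_Ioi.1 hp'.1) (not_lt.2 (mem_Iic.1 hp.1))
    · exact absurd (mem_Ioi.1 hp'.2.1) (not_lt.2 (mem_Iic.1 hp.2.1))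
  · congr 1
    ext ⟨y, z⟩
    simp only [mem_setOf_eq, mem_union, mem_Iic, mem_Ioi, mem_univ, true_and]
    constructor
    · intro h
      rcases le_or_gt y T with hy | hy
      · exact Or.inl (Or.inl ⟨hy, h⟩)
      · rcases le_or_gt z T with hz | hz
        · exact Or.inl (Or.inr ⟨hy, hz, h⟩)
        · exact Or.inr ⟨hy, hz, h⟩
    · rintro ((⟨-, h⟩ | ⟨-, -, h⟩) | ⟨-, -, h⟩) <;> exact h

lemma A_toReal (μ ν : Measure ℝ) [IsFiniteMeasure μ] [IsFiniteMeasure ν] (T c x : ℝ) :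
    ((μ.prod ν) {p : ℝ × ℝ | p.1 ∈ Iic T ∧ p.2 ∈ univ ∧ p.1 + p.2 ∈ Ioc x (x + c)}).toReal
      = ∫ y in Iic T, tailI ν c (x - y) ∂μ := by
  rw [slice_fst μ ν _ _ measurableSet_Iic MeasurableSet.univ c x]
  simp only [univ_inter]
  rw [← integral_toReal ?hm ?hf]
  · rfl
  case hm =>
    exact ((measurable_meas_Ioc ν c).comp (measurable_const.sub measurable_id)).aemeasurable
  case hf => exact Eventually.of_forall fun y => measure_lt_top ν _

lemma B_toReal (μ ν : Measure ℝ) [IsFiniteMeasure μ] [IsFiniteMeasure ν] (T c x : ℝ)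
    (hc : 0 ≤ c) (hx : 2 * T ≤ x) :
    ((μ.prod ν) {p : ℝ × ℝ | p.1 ∈ Ioi T ∧ p.2 ∈ Iic T ∧ p.1 + p.2 ∈ Ioc x (x + c)}).toReal
      = ∫ z in Iic T, tailI μ c (x - z) ∂ν := by
  rw [slice_snd μ ν _ _ measurableSet_Ioi measurableSet_Iic c x]
  have h : ∀ z ∈ Iic T, μ (Ioi T ∩ Ioc (x - z) (x - z + c)) = μ (Ioc (x - z) (x - z + c)) := by
    intro z hz
    rw [inter_eq_self_of_subset_right]
    intro w hw
    have := mem_Iic.1 hz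
    exact mem_Ioi.2 (lt_of_le_of_lt (by linarith) hw.1)
  rw [setLIntegral_congr_fun measurableSet_Iic h]
  rw [← integral_toReal ?hm ?hf]
  · rfl
  case hm =>
    exact ((measurable_meas_Ioc μ c).comp (measurable_const.sub measurable_id)).aemeasurable
  case hf => exact Eventually.of_forall fun y => measure_lt_top μ _

lemma meas_le_of_tail_le (F ν : Measure ℝ) [IsFiniteMeasure F] [IsFiniteMeasure ν]
    {C t c : ℝ} (hC : 0 ≤ C) (h : tailI ν c t ≤ C * tailI F c t) :
    ν (Ioc t (t + c)) ≤ ENNReal.ofReal C * F (Ioc t (t + c)) := by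
  calc ν (Ioc t (t + c)) = ENNReal.ofReal (tailI ν c t) :=
        (ENNReal.ofReal_toReal (measure_ne_top _ _)).symm
    _ ≤ ENNReal.ofReal (C * tailI F c t) := ENNReal.ofReal_le_ofReal h
    _ = ENNReal.ofReal C * ENNReal.ofReal (tailI F c t) := ENNReal.ofReal_mul hC
    _ = _ := by
        rw [show tailI F c t = (F (Ioc t (t + c))).toReal from rfl,
          ENNReal.ofReal_toReal (measure_ne_top _ _)]



lemma C_bound (F G₁ G₂ : Measure ℝ) [IsFiniteMeasure F] [IsFiniteMeasure G₁] [IsFiniteMeasure G₂]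
    {c t₁ C₁ C₂ : ℝ} (hC₁ : 0 ≤ C₁) (hC₂ : 0 ≤ C₂)
    (hg₁ : ∀ t, t₁ ≤ t → tailI G₁ c t ≤ C₁ * tailI F c t)
    (hg₂ : ∀ t, t₁ ≤ t → tailI G₂ c t ≤ C₂ * tailI F c t)
    {T : ℝ} (hT : t₁ + c ≤ T) (x : ℝ) :
    (G₁.prod G₂) {p : ℝ × ℝ | p.1 ∈ Ioi T ∧ p.2 ∈ Ioi T ∧ p.1 + p.2 ∈ Ioc x (x + c)}
      ≤ ENNReal.ofReal C₂ * (ENNReal.ofReal C₁ *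
        (F.prod F) {p : ℝ × ℝ | p.1 ∈ Ioi (T - c) ∧ p.2 ∈ Ioi (T - c) ∧
          p.1 + p.2 ∈ Ioc x (x + c)}) := by
  have hmeas : Measurable (fun z : ℝ => F (Ioc (x - z) (x - z + c))) :=
    (measurable_meas_Ioc F c).comp (measurable_const.sub measurable_id)
  have measF : Measurable (fun y : ℝ => ENNReal.ofReal C₂ * F (Ioc (x - y) (x - y + c))) :=
    ((measurable_meas_Ioc F c).comp (measurable_const.sub measurable_id)).const_mul _
  have measF' : Measurable (fun z : ℝ => ENNReal.ofReal C₁ * F (Ioc (x - z) (x - z + c))) :=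
    ((measurable_meas_Ioc F c).comp (measurable_const.sub measurable_id)).const_mul _
  calc (G₁.prod G₂) {p : ℝ × ℝ | p.1 ∈ Ioi T ∧ p.2 ∈ Ioi T ∧ p.1 + p.2 ∈ Ioc x (x + c)}
      ≤ (G₁.prod G₂) {p : ℝ × ℝ | p.1 ∈ Ioo T (x - T + c) ∧ p.2 ∈ univ ∧
          p.1 + p.2 ∈ Ioc x (x + c)} := by
        refine measure_mono fun p hp => ?_
        obtain ⟨h1, h2, h3⟩ := hp
        have h2' := mem_Ioi.1 h2
        refine ⟨mem_Ioo.2 ⟨mem_Ioi.1 h1, by linarith [h3.2]⟩, trivial, h3⟩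
    _ = ∫⁻ y in Ioo T (x - T + c), G₂ (univ ∩ Ioc (x - y) (x - y + c)) ∂G₁ :=
        slice_fst _ _ _ _ measurableSet_Ioo MeasurableSet.univ c x
    _ ≤ ∫⁻ y in Ioo T (x - T + c), ENNReal.ofReal C₂ * F (Ioc (x - y) (x - y + c)) ∂G₁ := by
        refine setLIntegral_mono measF fun y hy => ?_
        rw [univ_inter]
        exact meas_le_of_tail_le F G₂ hC₂ (hg₂ _ (by linarith [hy.2]))
    _ = ENNReal.ofReal C₂ * ∫⁻ y in Ioo T (x - T + c), F (Ioc (x - y) (x - y + c)) ∂G₁ :=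
        lintegral_const_mul _ hmeas
    _ = ENNReal.ofReal C₂ * ∫⁻ y in Ioo T (x - T + c), F (univ ∩ Ioc (x - y) (x - y + c)) ∂G₁ := by
        simp
    _ = ENNReal.ofReal C₂ * (G₁.prod F) {p : ℝ × ℝ | p.1 ∈ Ioo T (x - T + c) ∧ p.2 ∈ univ ∧
          p.1 + p.2 ∈ Ioc x (x + c)} := by
        rw [slice_fst _ _ _ _ measurableSet_Ioo MeasurableSet.univ c x]
    _ ≤ ENNReal.ofReal C₂ * (G₁.prod F) {p : ℝ × ℝ | p.1 ∈ univ ∧ p.2 ∈ Ioo (T - c) (x - T + c) ∧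
          p.1 + p.2 ∈ Ioc x (x + c)} := by
        refine mul_le_mul_right (measure_mono fun p hp => ?_) _
        obtain ⟨h1, -, h3⟩ := hp
        obtain ⟨h1a, h1b⟩ := mem_Ioo.1 h1
        exact ⟨trivial, mem_Ioo.2 ⟨by linarith [h3.1], by linarith [h3.2]⟩, h3⟩
    _ = ENNReal.ofReal C₂ * ∫⁻ z in Ioo (T - c) (x - T + c),
          G₁ (univ ∩ Ioc (x - z) (x - z + c)) ∂F := by
        rw [slice_snd _ _ _ _ MeasurableSet.univ measurableSet_Ioo c x]
    _ ≤ ENNReal.ofReal C₂ * ∫⁻ z in Ioo (T - c) (x - T + c),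
          ENNReal.ofReal C₁ * F (Ioc (x - z) (x - z + c)) ∂F := by
        refine mul_le_mul_right (setLIntegral_mono measF' fun z hz => ?_) _
        rw [univ_inter]
        exact meas_le_of_tail_le F G₁ hC₁ (hg₁ _ (by linarith [hz.2]))
    _ = ENNReal.ofReal C₂ * (ENNReal.ofReal C₁ *
          ∫⁻ z in Ioo (T - c) (x - T + c), F (univ ∩ Ioc (x - z) (x - z + c)) ∂F) := by
        rw [lintegral_const_mul _ hmeas]
        simp
    _ = ENNReal.ofReal C₂ * (ENNReal.ofReal C₁ *
          (F.prod F) {p : ℝ × ℝ | p.1 ∈ Ioo (T - c) (x - T + c) ∧ p.2 ∈ univ ∧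
            p.1 + p.2 ∈ Ioc x (x + c)}) := by
        rw [slice_fst _ _ _ _ measurableSet_Ioo MeasurableSet.univ c x]
    _ ≤ ENNReal.ofReal C₂ * (ENNReal.ofReal C₁ *
          (F.prod F) {p : ℝ × ℝ | p.1 ∈ Ioi (T - c) ∧ p.2 ∈ Ioi (T - c) ∧
            p.1 + p.2 ∈ Ioc x (x + c)}) := by
        refine mul_le_mul_right (mul_le_mul_right (measure_mono fun p hp => ?_) _) _
        obtain ⟨h1, -, h3⟩ := hp
        obtain ⟨h1a, h1b⟩ := mem_Ioo.1 h1
        exact ⟨mem_Ioi.2 h1a, mem_Ioi.2 (by linarith [h3.1]), h3⟩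



lemma ratio_bound_ev {g f : ℝ → ℝ} {cν : ℝ} (hg0 : ∀ x, 0 ≤ g x)
    (hpos : ∀ᶠ x in atTop, 0 < f x)
    (hν : Tendsto (fun x => g x / f x) atTop (𝓝 cν)) :
    ∀ᶠ t in atTop, g t ≤ (cν + 1) * f t := by
  filter_upwards [hpos, hν.eventually_le_const (lt_add_one cν)] with t h1 h2
  exact (div_le_iff₀ h1).1 h2

lemma long_all {f : ℝ → ℝ} (hpos : ∀ᶠ x in atTop, 0 < f x)
    (hlong : ∀ y : ℝ, 0 < y → Tendsto (fun x => f (x + y) / f x) atTop (𝓝 1)) :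
    ∀ y : ℝ, Tendsto (fun x => f (x + y) / f x) atTop (𝓝 1) := by
  intro y
  rcases lt_trichotomy y 0 with hy | hy | hy
  · have hshift : Tendsto (fun x : ℝ => x + y) atTop atTop :=
      tendsto_atTop_add_const_right atTop y tendsto_id
    have h1 : Tendsto (fun x => f (x + y + -y) / f (x + y)) atTop (𝓝 1) :=
      (hlong (-y) (by linarith)).comp hshift
    have h2 : Tendsto (fun x => (f (x + y + -y) / f (x + y))⁻¹) atTop (𝓝 1⁻¹) :=
      h1.inv₀ one_ne_zero
    rw [inv_one] at h2
    apply h2.congr'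
    apply Eventually.of_forall
    intro x
    show (f (x + y + -y) / f (x + y))⁻¹ = f (x + y) / f x
    rw [inv_div]
    congr 2
    ring
  · subst hy
    apply Tendsto.congr' (f₁ := fun _ => (1:ℝ)) _ tendsto_const_nhds
    filter_upwards [hpos] with x h3
    rw [add_zero, div_self h3.ne']
  · exact hlong y hy

lemma A_tendsto (F ν μ : Measure ℝ) [IsProbabilityMeasure F] [IsFiniteMeasure ν]
    [IsFiniteMeasure μ] (c : ℝ)
    (hpos : ∀ᶠ x in atTop, 0 < tailI F c x)
    (hlong : ∀ y : ℝ, Tendsto (fun x => tailI F c (x + y) / tailI F c x) atTop (𝓝 1))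
    (x₀ K : ℝ) (hK : 0 < K)
    (hAD : ∀ x > x₀, ∀ y > (0:ℝ), tailI F c (x + y) ≤ K * tailI F c x)
    (cν : ℝ) (hcν : 0 ≤ cν)
    (hν : Tendsto (fun x => tailI ν c x / tailI F c x) atTop (𝓝 cν)) (T : ℝ) :
    Tendsto (fun x => (∫ y in Iic T, tailI ν c (x - y) ∂μ) / tailI F c x) atTop
      (𝓝 (cν * (μ (Iic T)).toReal)) := by
  set f := tailI F c with hf
  set g := tailI ν c with hgdef
  set K' := max K 1 with hK'
  set M := (cν + 1) * K' * 2 with hM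
  have hK'1 : (1:ℝ) ≤ K' := le_max_right _ _
  have hK'K : K ≤ K' := le_max_left _ _
  have hg0 : ∀ t, 0 ≤ g t := fun t => ENNReal.toReal_nonneg
  have hf0 : ∀ t, 0 ≤ f t := fun t => ENNReal.toReal_nonneg
  have hbd := ratio_bound_ev hg0 hpos hν
  obtain ⟨t₁, ht₁⟩ := eventually_atTop.1 (hbd.and hpos)
  have hhalf : ∀ᶠ x in atTop, f (x - T) ≤ 2 * f x := by
    have hshift : Tendsto (fun x : ℝ => x + -T) atTop atTop :=
      tendsto_atTop_add_const_right atTop (-T) tendsto_id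
    have h1 : Tendsto (fun x => f (x + -T + T) / f (x + -T)) atTop (𝓝 1) :=
      (hlong T).comp hshift
    have h2 := h1.eventually_const_le (by norm_num : (1:ℝ)/2 < 1)
    have h3 : ∀ᶠ x in atTop, 0 < f (x + -T) := hshift.eventually hpos
    filter_upwards [h2, h3] with x h2 h3
    have e : x + -T + T = x := by ring
    rw [e] at h2
    have h4 := (le_div_iff₀ h3).1 h2
    have e2 : x - T = x + -T := by ring
    rw [e2]
    linarith
  -- the DCT
  have main : Tendsto (fun x => ∫ y in Iic T, g (x - y) / f x ∂μ) atTop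
      (𝓝 (∫ _ in Iic T, cν ∂μ)) := by
    apply tendsto_integral_filter_of_dominated_convergence (bound := fun _ => M)
    · apply Eventually.of_forall
      intro x
      exact (((measurable_tailI ν c).comp (measurable_const.sub measurable_id)).div_const
        _).aestronglyMeasurable
    · have hev : ∀ᶠ x in atTop, (t₁ ≤ x - T) ∧ (x₀ < x - T) ∧ (f (x - T) ≤ 2 * f x) ∧ 0 < f x := by
        have e1 : ∀ᶠ x : ℝ in atTop, t₁ ≤ x - T := by
          filter_upwards [eventually_ge_atTop (t₁ + T)] with x hx; linarith
        have e2 : ∀ᶠ x : ℝ in atTop, x₀ < x - T := by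
          filter_upwards [eventually_gt_atTop (x₀ + T)] with x hx; linarith
        filter_upwards [e1, e2, hhalf, hpos] with x a b d e using ⟨a, b, d, e⟩
      filter_upwards [hev] with x hx
      obtain ⟨hx1, hx2, hx3, hx4⟩ := hx
      rw [ae_restrict_iff' measurableSet_Iic]
      apply Eventually.of_forall
      intro y hy
      have hyT : y ≤ T := hy
      have hxy1 : t₁ ≤ x - y := by linarith
      have hb1 : g (x - y) ≤ (cν + 1) * f (x - y) := (ht₁ _ hxy1).1
      have hb2 : f (x - y) ≤ K' * f (x - T) := by
        rcases eq_or_lt_of_le hyT with hyT' | hyT'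
        · subst hyT'
          nlinarith [hf0 (x - y)]
        · have := hAD (x - T) hx2 (T - y) (by linarith)
          have e : x - T + (T - y) = x - y := by ring
          rw [e] at this
          calc f (x - y) ≤ K * f (x - T) := this
            _ ≤ K' * f (x - T) := by nlinarith [hf0 (x - T)]
      have hb3 : g (x - y) ≤ M * f x := by
        have h5 : g (x - y) ≤ (cν + 1) * (K' * (2 * f x)) := by
          calc g (x - y) ≤ (cν + 1) * f (x - y) := hb1
            _ ≤ (cν + 1) * (K' * f (x - T)) :=
                mul_le_mul_of_nonneg_left hb2 (by linarith)
            _ ≤ (cν + 1) * (K' * (2 * f x)) :=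
                mul_le_mul_of_nonneg_left
                  (mul_le_mul_of_nonneg_left hx3 (by linarith)) (by linarith)
        calc g (x - y) ≤ (cν + 1) * (K' * (2 * f x)) := h5
          _ = M * f x := by rw [hM]; ring
      rw [Real.norm_eq_abs, abs_of_nonneg (div_nonneg (hg0 _) hx4.le), div_le_iff₀ hx4]
      exact hb3
    · exact integrable_const M
    · apply Eventually.of_forall
      intro y
      have hshift : Tendsto (fun x : ℝ => x + -y) atTop atTop :=
        tendsto_atTop_add_const_right atTop (-y) tendsto_id
      have l1 : Tendsto (fun x => g (x - y) / f (x - y)) atTop (𝓝 cν) := by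
        have := hν.comp hshift
        apply this.congr
        intro x
        simp only [Function.comp_apply, sub_eq_add_neg]
      have l2 : Tendsto (fun x => f (x - y) / f x) atTop (𝓝 1) := by
        apply (hlong (-y)).congr
        intro x
        rw [sub_eq_add_neg]
      have l3 := l1.mul l2
      rw [mul_one] at l3
      apply l3.congr'
      have hfpos' : ∀ᶠ x in atTop, 0 < f (x - y) := by
        have := hshift.eventually hpos
        filter_upwards [this] with x hx
        rwa [sub_eq_add_neg]
      filter_upwards [hfpos'] with x hx
      rw [div_mul_div_comm, mul_comm (g (x - y)) (f (x - y)), mul_div_mul_left _ _ hx.ne']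
  have hval : (∫ _ in Iic T, cν ∂μ) = cν * (μ (Iic T)).toReal := by
    rw [integral_const, smul_eq_mul, measureReal_def, Measure.restrict_apply_univ, mul_comm]
  rw [hval] at main
  apply main.congr
  intro x
  rw [integral_div]



def LongDelta (μ : Measure ℝ) (c : ℝ) : Prop :=
  (∀ᶠ x in atTop, 0 < tailI μ c x) ∧
  ∀ y : ℝ, 0 < y → Tendsto (fun x => tailI μ c (x + y) / tailI μ c x) atTop (𝓝 1)

def SDelta (μ : Measure ℝ) (c : ℝ) : Prop :=
  LongDelta μ c ∧
  Tendsto (fun x => tailI (μ.conv μ) c x / tailI μ c x) atTop (𝓝 2)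

def AlmostDec (α : ℝ → ℝ) : Prop :=
  ∃ x₀ > (0:ℝ), ∃ K > (0:ℝ), ∀ x > x₀, ∀ y > (0:ℝ), α (x + y) ≤ K * α x

def DDelta (μ : Measure ℝ) (c : ℝ) : Prop := AlmostDec (tailI μ c)

-- main lemma

set_option maxHeartbeats 1000000 in
lemma main_tendsto (F G₁ G₂ : Measure ℝ) [IsProbabilityMeasure F]
    [IsProbabilityMeasure G₁] [IsProbabilityMeasure G₂]
    (c : ℝ) (hc : 0 < c) (hF : SDelta F c) (hFD : DDelta F c)
    (c₁ c₂ : ℝ) (hc₁ : 0 ≤ c₁) (hc₂ : 0 ≤ c₂)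
    (h₁ : Tendsto (fun x => tailI G₁ c x / tailI F c x) atTop (𝓝 c₁))
    (h₂ : Tendsto (fun x => tailI G₂ c x / tailI F c x) atTop (𝓝 c₂)) :
    Tendsto (fun x => tailI (G₁.conv G₂) c x / tailI F c x) atTop (𝓝 (c₁ + c₂)) := by
  obtain ⟨⟨hpos, hlong0⟩, hFF⟩ := hF
  obtain ⟨x₀, hx₀, K, hK, hAD⟩ := hFD
  set f := tailI F c with hfdef
  have hlong : ∀ y : ℝ, Tendsto (fun x => f (x + y) / f x) atTop (𝓝 1) := long_all hpos hlong0
  have hf0 : ∀ t, 0 ≤ f t := fun t => ENNReal.toReal_nonneg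
  have hbd1 := ratio_bound_ev (g := tailI G₁ c) (fun t => ENNReal.toReal_nonneg) hpos h₁
  have hbd2 := ratio_bound_ev (g := tailI G₂ c) (fun t => ENNReal.toReal_nonneg) hpos h₂
  obtain ⟨t₁, ht₁⟩ := eventually_atTop.1 (hbd1.and hbd2)
  have hFtriv : Tendsto (fun x => tailI F c x / tailI F c x) atTop (𝓝 1) := by
    apply Tendsto.congr' (f₁ := fun _ => (1:ℝ)) _ tendsto_const_nhds
    filter_upwards [hpos] with x hx
    rw [div_self hx.ne']
  rw [Metric.tendsto_nhds]
  intro ε hε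
  set P := (c₁ + 1) * (c₂ + 1) with hPdef
  have hP : 0 < P := by nlinarith
  set D := 3 + c₁ + c₂ + 8 * P with hD
  have hDpos : 0 < D := by nlinarith
  set δ := ε / D with hδdef
  have hδpos : 0 < δ := div_pos hε hDpos
  have hεδ : ε = δ * D := by
    rw [hδdef, div_mul_cancel₀ _ hDpos.ne']
  -- choose T
  have hG1lim : Tendsto (fun T => (G₁ (Iic T)).toReal) atTop (𝓝 1) := by
    have h := (ENNReal.tendsto_toReal (by simp : G₁ univ ≠ ⊤)).comp (tendsto_measure_Iic_atTop G₁)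
    simpa [Function.comp_def] using h
  have hG2lim : Tendsto (fun T => (G₂ (Iic T)).toReal) atTop (𝓝 1) := by
    have h := (ENNReal.tendsto_toReal (by simp : G₂ univ ≠ ⊤)).comp (tendsto_measure_Iic_atTop G₂)
    simpa [Function.comp_def] using h
  have hFlim : Tendsto (fun T => (F (Iic (T - c))).toReal) atTop (𝓝 1) := by
    have h0 : Tendsto (fun T : ℝ => T - c) atTop atTop := by
      simpa [sub_eq_add_neg] using tendsto_atTop_add_const_right atTop (-c) (tendsto_id (α := ℝ))
    have h := (ENNReal.tendsto_toReal (by simp : F univ ≠ ⊤)).comp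
      ((tendsto_measure_Iic_atTop F).comp h0)
    simpa [Function.comp_def] using h
  have hTev : ∀ᶠ T in atTop, (t₁ + c ≤ T) ∧ (1 - δ ≤ (G₁ (Iic T)).toReal) ∧
      (1 - δ ≤ (G₂ (Iic T)).toReal) ∧ (1 - δ ≤ (F (Iic (T - c))).toReal) := by
    filter_upwards [eventually_ge_atTop (t₁ + c),
      hG1lim.eventually_const_le (by linarith : 1 - δ < 1),
      hG2lim.eventually_const_le (by linarith : 1 - δ < 1),
      hFlim.eventually_const_le (by linarith : 1 - δ < 1)] with T a b d e using ⟨a, b, d, e⟩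
  obtain ⟨T, hT1, hT2, hT3, hT4⟩ := hTev.exists
  -- limit statements at level T
  have L1 := A_tendsto F G₂ G₁ c hpos hlong x₀ K hK hAD c₂ hc₂ h₂ T
  have L2 := A_tendsto F G₁ G₂ c hpos hlong x₀ K hK hAD c₁ hc₁ h₁ T
  have L3 := A_tendsto F F F c hpos hlong x₀ K hK hAD 1 one_pos.le hFtriv (T - c)
  rw [one_mul] at L3
  -- identity
  set A₁ : ℝ → ℝ := fun x => ∫ y in Iic T, tailI G₂ c (x - y) ∂G₁ with hA₁
  set A₂ : ℝ → ℝ := fun x => ∫ z in Iic T, tailI G₁ c (x - z) ∂G₂ with hA₂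
  set AF : ℝ → ℝ := fun x => ∫ w in Iic (T - c), tailI F c (x - w) ∂F with hAF
  set Cset : ℝ → Set (ℝ × ℝ) := fun x =>
    {p : ℝ × ℝ | p.1 ∈ Ioi T ∧ p.2 ∈ Ioi T ∧ p.1 + p.2 ∈ Ioc x (x + c)} with hCset
  set CFset : ℝ → Set (ℝ × ℝ) := fun x =>
    {p : ℝ × ℝ | p.1 ∈ Ioi (T - c) ∧ p.2 ∈ Ioi (T - c) ∧ p.1 + p.2 ∈ Ioc x (x + c)} with hCFset
  have hid : ∀ x, 2 * T ≤ x →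
      tailI (G₁.conv G₂) c x = A₁ x + A₂ x + ((G₁.prod G₂) (Cset x)).toReal := by
    intro x hx
    have e0 : tailI (G₁.conv G₂) c x = ((G₁.conv G₂) (Ioc x (x + c))).toReal := rfl
    rw [e0, conv_mass, partition G₁ G₂ T c x, ENNReal.toReal_add, ENNReal.toReal_add,
      A_toReal, B_toReal G₁ G₂ T c x hc.le hx]
    · exact measure_ne_top _ _
    · exact measure_ne_top _ _
    · exact ENNReal.add_ne_top.2 ⟨measure_ne_top _ _, measure_ne_top _ _⟩
    · exact measure_ne_top _ _
  have hidF : ∀ x, 2 * (T - c) ≤ x →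
      tailI (F.conv F) c x = AF x + AF x + ((F.prod F) (CFset x)).toReal := by
    intro x hx
    have e0 : tailI (F.conv F) c x = ((F.conv F) (Ioc x (x + c))).toReal := rfl
    rw [e0, conv_mass, partition F F (T - c) c x, ENNReal.toReal_add, ENNReal.toReal_add,
      A_toReal, B_toReal F F (T - c) c x hc.le hx]
    · exact measure_ne_top _ _
    · exact measure_ne_top _ _
    · exact ENNReal.add_ne_top.2 ⟨measure_ne_top _ _, measure_ne_top _ _⟩
    · exact measure_ne_top _ _
  -- C bound, real version
  have hCb : ∀ x, ((G₁.prod G₂) (Cset x)).toReal ≤ P * ((F.prod F) (CFset x)).toReal := by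
    intro x
    have h := C_bound F G₁ G₂ (by linarith : (0:ℝ) ≤ c₁ + 1) (by linarith : (0:ℝ) ≤ c₂ + 1)
      (fun t ht => (ht₁ t ht).1) (fun t ht => (ht₁ t ht).2) hT1 x
    have h2 := ENNReal.toReal_mono (by
      exact ENNReal.mul_ne_top ENNReal.ofReal_ne_top
        (ENNReal.mul_ne_top ENNReal.ofReal_ne_top (measure_ne_top _ _))) h
    rw [ENNReal.toReal_mul, ENNReal.toReal_mul, ENNReal.toReal_ofReal (by linarith),
      ENNReal.toReal_ofReal (by linarith)] at h2
    calc ((G₁.prod G₂) (Cset x)).toReal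
        ≤ (c₂ + 1) * ((c₁ + 1) * ((F.prod F) (CFset x)).toReal) := h2
      _ = P * ((F.prod F) (CFset x)).toReal := by rw [hPdef]; ring
  -- final eventually
  set g1T := (G₁ (Iic T)).toReal with hg1T
  set g2T := (G₂ (Iic T)).toReal with hg2T
  set fT := (F (Iic (T - c))).toReal with hfT
  have hg1T1 : g1T ≤ 1 := by
    rw [hg1T]
    exact ENNReal.toReal_le_of_le_ofReal one_pos.le (by simpa using prob_le_one)
  have hg2T1 : g2T ≤ 1 := by
    rw [hg2T]
    exact ENNReal.toReal_le_of_le_ofReal one_pos.le (by simpa using prob_le_one)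
  filter_upwards [(Metric.tendsto_nhds.1 L1) δ hδpos, (Metric.tendsto_nhds.1 L2) δ hδpos,
    (Metric.tendsto_nhds.1 L3) δ hδpos, (Metric.tendsto_nhds.1 hFF) δ hδpos,
    eventually_ge_atTop (2 * T), eventually_ge_atTop (2 * (T - c)), hpos] with x e1 e2 e3 e4 ex1 ex2 efx
  rw [Real.dist_eq] at e1 e2 e3 e4 ⊢
  rw [hid x ex1]
  -- abbreviations
  have hCFr : ((F.prod F) (CFset x)).toReal / f x ≤ 5 * δ := by
    have hrearr : ((F.prod F) (CFset x)).toReal = tailI (F.conv F) c x - 2 * AF x := by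
      have := hidF x ex2
      linarith
    rw [hrearr, sub_div]
    have hAFr : 1 - 2 * δ ≤ AF x / f x := by
      have := abs_lt.1 e3
      linarith [this.1, hT4]
    have hFFr : tailI (F.conv F) c x / f x ≤ 2 + δ := by
      have := abs_lt.1 e4
      linarith [this.2]
    have : (2 * AF x) / f x = 2 * (AF x / f x) := by ring
    rw [this]
    linarith
  have hCr0 : 0 ≤ ((G₁.prod G₂) (Cset x)).toReal / f x :=
    div_nonneg ENNReal.toReal_nonneg (hf0 x)
  have hCr : ((G₁.prod G₂) (Cset x)).toReal / f x ≤ P * (5 * δ) := by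
    calc ((G₁.prod G₂) (Cset x)).toReal / f x
        ≤ (P * ((F.prod F) (CFset x)).toReal) / f x :=
          (div_le_div_iff_of_pos_right efx).2 (hCb x)
      _ = P * (((F.prod F) (CFset x)).toReal / f x) := by ring
      _ ≤ P * (5 * δ) := mul_le_mul_of_nonneg_left hCFr hP.le
  have hsplit : (A₁ x + A₂ x + ((G₁.prod G₂) (Cset x)).toReal) / f x
      = A₁ x / f x + A₂ x / f x + ((G₁.prod G₂) (Cset x)).toReal / f x := by ring
  rw [hsplit]
  have b1 := abs_lt.1 e1
  have b2 := abs_lt.1 e2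
  have m1 : c₂ * g1T ≤ c₂ := by
    calc c₂ * g1T ≤ c₂ * 1 := mul_le_mul_of_nonneg_left hg1T1 hc₂
      _ = c₂ := mul_one c₂
  have m1' : c₂ - c₂ * δ ≤ c₂ * g1T := by
    have : c₂ * (1 - δ) ≤ c₂ * g1T := mul_le_mul_of_nonneg_left hT2 hc₂
    linarith [this]
  have m2 : c₁ * g2T ≤ c₁ := by
    calc c₁ * g2T ≤ c₁ * 1 := mul_le_mul_of_nonneg_left hg2T1 hc₁
      _ = c₁ := mul_one c₁
  have m2' : c₁ - c₁ * δ ≤ c₁ * g2T := by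
    have : c₁ * (1 - δ) ≤ c₁ * g2T := mul_le_mul_of_nonneg_left hT3 hc₁
    linarith [this]
  have hεge : P * (5 * δ) + 2 * δ + c₁ * δ + c₂ * δ < ε := by
    rw [hεδ, hD]
    nlinarith [mul_pos hδpos hP, hδpos, mul_nonneg hc₁ hδpos.le, mul_nonneg hc₂ hδpos.le]
  refine abs_lt.2 ⟨by linarith, by linarith⟩

end CCS

theorem conv_closure_sdelta (F G₁ G₂ : Measure ℝ) [IsProbabilityMeasure F]
    [IsProbabilityMeasure G₁] [IsProbabilityMeasure G₂]
    (c : ℝ) (hc : 0 < c) (hF : SDelta F c) (hFD : DDelta F c)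
    (c₁ c₂ : ℝ) (hc₁ : 0 ≤ c₁) (hc₂ : 0 ≤ c₂)
    (h₁ : Tendsto (fun x => tailI G₁ c x / tailI F c x) atTop (𝓝 c₁))
    (h₂ : Tendsto (fun x => tailI G₂ c x / tailI F c x) atTop (𝓝 c₂)) :
    Tendsto (fun x => tailI (G₁.conv G₂) c x / tailI F c x) atTop (𝓝 (c₁ + c₂)) ∧
    (0 < c₁ + c₂ → SDelta (G₁.conv G₂) c) := by
  have part1 := CCS.main_tendsto F G₁ G₂ c hc hF hFD c₁ c₂ hc₁ hc₂ h₁ h₂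
  refine ⟨part1, fun hsum => ?_⟩
  set s := c₁ + c₂ with hs
  set H := G₁.conv G₂ with hH
  haveI : IsProbabilityMeasure H := by
    rw [hH]
    infer_instance
  have hpos := hF.1.1
  have hlongF := CCS.long_all hpos hF.1.2
  have hHpos : ∀ᶠ x in atTop, 0 < tailI H c x := by
    filter_upwards [hpos, part1.eventually_const_le (half_lt_self hsum)] with x a b
    have h2 := (le_div_iff₀ a).1 b
    nlinarith [half_pos hsum, mul_pos (half_pos hsum) a]
  have hHf : Tendsto (fun x => tailI F c x / tailI H c x) atTop (𝓝 s⁻¹) :=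
    (part1.inv₀ (ne_of_gt hsum)).congr fun x => inv_div _ _
  have hHlong : ∀ y : ℝ, 0 < y →
      Tendsto (fun x => tailI H c (x + y) / tailI H c x) atTop (𝓝 1) := by
    intro y hy
    have hshift : Tendsto (fun x : ℝ => x + y) atTop atTop :=
      tendsto_atTop_add_const_right atTop y tendsto_id
    have l1 : Tendsto (fun x => tailI H c (x + y) / tailI F c (x + y)) atTop (𝓝 s) :=
      part1.comp hshift
    have l2 : Tendsto (fun x => tailI F c (x + y) / tailI F c x) atTop (𝓝 1) := hlongF y
    have l4 := (l1.mul l2).mul hHf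
    have e : s * 1 * s⁻¹ = 1 := by
      rw [mul_one, mul_inv_cancel₀ hsum.ne']
    rw [e] at l4
    apply l4.congr'
    filter_upwards [hpos, hshift.eventually hpos, hHpos] with x hx1 hx2 hx3
    field_simp
  have hHH := CCS.main_tendsto F H H c hc hF hFD s s hsum.le hsum.le part1 part1
  have final : Tendsto (fun x => tailI (H.conv H) c x / tailI H c x) atTop (𝓝 2) := by
    have l := hHH.mul hHf
    have e : (s + s) * s⁻¹ = 2 := by
      field_simp
      ring
    rw [e] at l
    apply l.congr'
    filter_upwards [hpos] with x hx
    rw [div_mul_div_comm, mul_comm (tailI (H.conv H) c x) (tailI F c x),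
      mul_div_mul_left _ _ hx.ne']
  exact ⟨⟨hHpos, hHlong⟩, final⟩
end
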